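/- arXiv:2106.07336 — 8 statements merged into one kernel-verified Lean document; each statement's English description precedes it below -/
import Mathlib

section
/- Shearer's Lemma: Let X_1, ..., X_n be discrete random variables, and let S_1, ..., S_m be subsets of {1, ..., n} such that every element i in {1, ..., n} belongs to at least k of these subsets (k ≥ 1). Then k · H(X_1, ..., X_n) ≤ Σ_{j=1}^m H(X_{S_j}), where X_S denotes the random vector (X_i)_{i ∈ S}. -/
/-- The Shannon entropy (in nats) of the discrete random variable `X` defined on the
finite probability space `(Ω, μ)`, with the convention `0 · log 0 = 0`
(automatic in Lean since `Real.log 0 = 0`). -/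
noncomputable def entropy {Ω β : Type*} [Fintype Ω] [DecidableEq β]
    (μ : Ω → ℝ) (X : Ω → β) : ℝ :=
  -∑ b ∈ Finset.univ.image X,
      ((∑ ω ∈ Finset.univ.filter (fun ω => X ω = b), μ ω) *
        Real.log (∑ ω ∈ Finset.univ.filter (fun ω => X ω = b), μ ω))

/-!
Writing `p_Y(ω)` for the mass of the level set of `Y` through `ω`, the entropy is
`H(Y) = -∑ μ(ω) log p_Y(ω)`; it depends only on the partition of `Ω` induced by `Y`.
Hence `A ↦ H(X_A)` is monotone, and it is submodular: with `U = X_A`, `V = X_B`,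
`Z = X_{A∩B}` and `(U, V) ≃ X_{A∪B}`, the inequality `H(U, V) + H(Z) ≤ H(U) + H(V)` is
`∑ μ log r ≤ 0` for `r = p_U p_V / (p_{(U,V)} p_Z)`, which follows from `log r ≤ r - 1`
and `∑ μ r ≤ ∑ μ` (a double counting over the level sets).

Shearer's inequality holds for every monotone submodular `F` with `F ∅ = 0`: ordering the
indices, `F univ` telescopes into the increments `F {j ≤ i} - F {j < i}`; by submodularity
each of them is at most the increment of `F` at `i` along any `S ∋ i`, and each `i` lies in
at least `k` of the `S j`.
-/

open Finset Real

section FiberMass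

variable {Ω β γ : Type*} [Fintype Ω] [DecidableEq β] [DecidableEq γ] {μ : Ω → ℝ}

variable (μ) in
noncomputable def fiberMass (X : Ω → β) (ω : Ω) : ℝ :=
  ∑ ω' ∈ univ.filter (fun ω' => X ω' = X ω), μ ω'

theorem fiberMass_nonneg (hμ0 : ∀ ω, 0 ≤ μ ω) (X : Ω → β) (ω : Ω) : 0 ≤ fiberMass μ X ω :=
  sum_nonneg fun ω _ => hμ0 ω

theorem fiberMass_pos (hμ0 : ∀ ω, 0 ≤ μ ω) (X : Ω → β) {ω : Ω} (h : 0 < μ ω) :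
    0 < fiberMass μ X ω :=
  h.trans_le (single_le_sum (fun ω _ => hμ0 ω) (by simp))

theorem fiberMass_eq_of_eq {X : Ω → β} {ω ω' : Ω} (h : X ω = X ω') :
    fiberMass μ X ω = fiberMass μ X ω' := by
  rw [fiberMass, h, fiberMass]

theorem fiberMass_le_of_determines (hμ0 : ∀ ω, 0 ≤ μ ω) {X : Ω → β} {Y : Ω → γ}
    (h : ∀ ω ω', X ω = X ω' → Y ω = Y ω') (ω : Ω) : fiberMass μ X ω ≤ fiberMass μ Y ω :=
  sum_le_sum_of_subset_of_nonneg (monotone_filter_right _ fun ω' _ => h ω' ω)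
    fun ω _ _ => hμ0 ω

theorem fiberMass_congr {X : Ω → β} {Y : Ω → γ} (h : ∀ ω ω', X ω = X ω' ↔ Y ω = Y ω') :
    fiberMass μ X = fiberMass μ Y := by
  ext ω
  simp only [fiberMass, h]

theorem sum_fiber_div_fiberMass_le_one (X : Ω → β) (ω₀ : Ω) :
    ∑ ω ∈ univ.filter (fun ω => X ω = X ω₀), μ ω / fiberMass μ X ω ≤ 1 := by
  rw [sum_congr rfl fun ω hω => by rw [fiberMass_eq_of_eq (mem_filter.mp hω).2], ← sum_div]
  exact div_self_le_one _

theorem entropy_eq_neg_sum_fiberMass (X : Ω → β) :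
    entropy μ X = -∑ ω, μ ω * log (fiberMass μ X ω) := by
  rw [entropy, neg_inj,
    ← sum_fiberwise_of_maps_to (g := X) fun ω _ => mem_image_of_mem X (mem_univ ω)]
  refine sum_congr rfl fun b _ => ?_
  rw [sum_mul]
  refine sum_congr rfl fun ω hω => ?_
  rw [fiberMass, (mem_filter.mp hω).2]

theorem entropy_congr {X : Ω → β} {Y : Ω → γ} (h : ∀ ω ω', X ω = X ω' ↔ Y ω = Y ω') :
    entropy μ X = entropy μ Y := by
  rw [entropy_eq_neg_sum_fiberMass, entropy_eq_neg_sum_fiberMass, fiberMass_congr h]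

theorem entropy_le_of_determines (hμ0 : ∀ ω, 0 ≤ μ ω) {X : Ω → β} {Y : Ω → γ}
    (h : ∀ ω ω', X ω = X ω' → Y ω = Y ω') : entropy μ Y ≤ entropy μ X := by
  rw [entropy_eq_neg_sum_fiberMass, entropy_eq_neg_sum_fiberMass, neg_le_neg_iff]
  refine sum_le_sum fun ω _ => ?_
  rcases (hμ0 ω).eq_or_lt with h0 | h0
  · simp [← h0]
  · exact mul_le_mul_of_nonneg_left (log_le_log (fiberMass_pos hμ0 X h0)
      (fiberMass_le_of_determines hμ0 h ω)) (hμ0 ω)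

theorem entropy_of_forall_eq (hμ1 : ∑ ω, μ ω = 1) {X : Ω → β} (h : ∀ ω ω', X ω = X ω') :
    entropy μ X = 0 := by
  have hone : ∀ ω, fiberMass μ X ω = 1 := fun ω => by
    rw [fiberMass, filter_true_of_mem fun ω' _ => h ω' ω, hμ1]
  simp [entropy_eq_neg_sum_fiberMass, hone]

end FiberMass

theorem sum_mul_log_nonpos_of_sum_mul_le {Ω : Type*} [Fintype Ω] {μ r : Ω → ℝ}
    (hμ0 : ∀ ω, 0 ≤ μ ω) (hr : ∀ ω, 0 < μ ω → 0 < r ω) (h : ∑ ω, μ ω * r ω ≤ ∑ ω, μ ω) :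
    ∑ ω, μ ω * log (r ω) ≤ 0 := by
  have hlog : ∀ ω, μ ω * log (r ω) ≤ μ ω * r ω - μ ω := fun ω => by
    rcases (hμ0 ω).eq_or_lt with h0 | h0
    · simp [← h0]
    · nlinarith [log_le_sub_one_of_pos (hr ω h0)]
  linarith [sum_le_sum fun ω (_ : ω ∈ univ) => hlog ω,
    sum_sub_distrib (s := univ) (fun ω => μ ω * r ω) μ]

section Submodularity

variable {Ω β γ δ : Type*} [Fintype Ω] [DecidableEq β] [DecidableEq γ] [DecidableEq δ]
  {μ : Ω → ℝ} {U : Ω → β} {V : Ω → γ} {Z : Ω → δ}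

theorem sum_filter_div_fiberMass_pair_le (hμ0 : ∀ ω, 0 ≤ μ ω)
    (hUZ : ∀ ω ω', U ω = U ω' → Z ω = Z ω') (hVZ : ∀ ω ω', V ω = V ω' → Z ω = Z ω')
    (ω₁ ω₂ : Ω) :
    ∑ ω ∈ univ.filter (fun ω => U ω = U ω₁ ∧ V ω = V ω₂),
        μ ω / (fiberMass μ (fun ω => (U ω, V ω)) ω * fiberMass μ Z ω) ≤
      if Z ω₂ = Z ω₁ then 1 / fiberMass μ Z ω₂ else 0 := by
  obtain ⟨ω₀, hω₀⟩ | hempty :=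
    (univ.filter (fun ω => U ω = U ω₁ ∧ V ω = V ω₂)).eq_empty_or_nonempty.symm
  · simp only [mem_filter, mem_univ, true_and] at hω₀
    rw [if_pos ((hVZ _ _ hω₀.2).symm.trans (hUZ _ _ hω₀.1))]
    calc ∑ ω ∈ univ.filter (fun ω => U ω = U ω₁ ∧ V ω = V ω₂),
          μ ω / (fiberMass μ (fun ω => (U ω, V ω)) ω * fiberMass μ Z ω)
        = (∑ ω ∈ univ.filter (fun ω => (U ω, V ω) = (U ω₀, V ω₀)),
            μ ω / fiberMass μ (fun ω => (U ω, V ω)) ω) / fiberMass μ Z ω₂ := by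
          simp only [Prod.mk.injEq, hω₀, sum_div, div_div]
          refine sum_congr rfl fun ω hω => ?_
          rw [fiberMass_eq_of_eq (hVZ ω ω₂ (mem_filter.mp hω).2.2)]
      _ ≤ 1 / fiberMass μ Z ω₂ :=
          div_le_div_of_nonneg_right (sum_fiber_div_fiberMass_le_one _ ω₀)
            (fiberMass_nonneg hμ0 Z ω₂)
  · rw [hempty, sum_empty]
    split_ifs <;> simp [fiberMass_nonneg hμ0]

theorem sum_mul_fiberMass_ratio_le (hμ0 : ∀ ω, 0 ≤ μ ω)
    (hUZ : ∀ ω ω', U ω = U ω' → Z ω = Z ω') (hVZ : ∀ ω ω', V ω = V ω' → Z ω = Z ω') :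
    ∑ ω, μ ω * (fiberMass μ U ω * fiberMass μ V ω /
      (fiberMass μ (fun ω => (U ω, V ω)) ω * fiberMass μ Z ω)) ≤ ∑ ω, μ ω := by
  set D := fun ω => fiberMass μ (fun ω => (U ω, V ω)) ω * fiberMass μ Z ω
  calc ∑ ω, μ ω * (fiberMass μ U ω * fiberMass μ V ω / D ω)
      = ∑ ω, ∑ p ∈ univ.filter (fun ω₁ => U ω₁ = U ω) ×ˢ univ.filter (fun ω₂ => V ω₂ = V ω),
          μ p.1 * μ p.2 * (μ ω / D ω) := by
        refine sum_congr rfl fun ω _ => ?_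
        rw [sum_product, fiberMass, fiberMass, sum_mul_sum, sum_div, mul_sum]
        refine sum_congr rfl fun _ _ => ?_
        rw [sum_div, mul_sum]
        exact sum_congr rfl fun _ _ => by ring
    _ = ∑ p : Ω × Ω, ∑ ω ∈ univ.filter (fun ω => U ω = U p.1 ∧ V ω = V p.2),
          μ p.1 * μ p.2 * (μ ω / D ω) :=
        sum_comm' fun ω p => by
          simp only [mem_univ, mem_product, mem_filter, true_and, and_true, eq_comm]
    _ = ∑ ω₁, ∑ ω₂, μ ω₁ * μ ω₂ *
          ∑ ω ∈ univ.filter (fun ω => U ω = U ω₁ ∧ V ω = V ω₂), μ ω / D ω := by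
        simp only [Fintype.sum_prod_type, mul_sum]
    _ ≤ ∑ ω₁, ∑ ω₂, μ ω₁ * μ ω₂ * if Z ω₂ = Z ω₁ then 1 / fiberMass μ Z ω₂ else 0 := by
        gcongr with ω₁ _ ω₂
        · exact mul_nonneg (hμ0 ω₁) (hμ0 ω₂)
        · exact sum_filter_div_fiberMass_pair_le hμ0 hUZ hVZ ω₁ ω₂
    _ = ∑ ω₁, μ ω₁ * ∑ ω₂ ∈ univ.filter (fun ω₂ => Z ω₂ = Z ω₁), μ ω₂ / fiberMass μ Z ω₂ := by
        simp only [mul_ite, mul_zero, sum_ite, sum_const_zero, add_zero, mul_sum]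
        ring_nf
    _ ≤ ∑ ω₁, μ ω₁ := by
        gcongr with ω₁
        exact mul_le_of_le_one_right (hμ0 ω₁) (sum_fiber_div_fiberMass_le_one Z ω₁)

theorem entropy_pair_add_le (hμ0 : ∀ ω, 0 ≤ μ ω)
    (hUZ : ∀ ω ω', U ω = U ω' → Z ω = Z ω') (hVZ : ∀ ω ω', V ω = V ω' → Z ω = Z ω') :
    entropy μ (fun ω => (U ω, V ω)) + entropy μ Z ≤ entropy μ U + entropy μ V := by
  have hsplit : ∀ ω, μ ω * log (fiberMass μ U ω * fiberMass μ V ω /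
      (fiberMass μ (fun ω => (U ω, V ω)) ω * fiberMass μ Z ω)) =
        μ ω * log (fiberMass μ U ω) + μ ω * log (fiberMass μ V ω) -
          μ ω * log (fiberMass μ (fun ω => (U ω, V ω)) ω) - μ ω * log (fiberMass μ Z ω) :=
    fun ω => by
      rcases (hμ0 ω).eq_or_lt with h0 | h0
      · simp [← h0]
      · have hU := fiberMass_pos hμ0 U h0
        have hV := fiberMass_pos hμ0 V h0
        have hW := fiberMass_pos hμ0 (fun ω => (U ω, V ω)) h0
        have hZ := fiberMass_pos hμ0 Z h0
        rw [log_div (by positivity) (by positivity), log_mul hU.ne' hV.ne',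
          log_mul hW.ne' hZ.ne']
        ring
  have hgibbs := sum_mul_log_nonpos_of_sum_mul_le hμ0 (fun ω h0 => by
      have := fiberMass_pos hμ0 U h0
      have := fiberMass_pos hμ0 V h0
      have := fiberMass_pos hμ0 (fun ω => (U ω, V ω)) h0
      have := fiberMass_pos hμ0 Z h0
      positivity)
    (sum_mul_fiberMass_ratio_le hμ0 hUZ hVZ)
  simp only [hsplit, sum_sub_distrib, sum_add_distrib] at hgibbs
  simp only [entropy_eq_neg_sum_fiberMass (μ := μ)]
  linarith

end Submodularity

section OrderedIncrement

variable {ι : Type*} [LinearOrder ι] (F : Finset ι → ℝ)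

/-- For `F = subfamilyEntropy X μ` this is the conditional entropy of `X i` given
`(X j)_{j ∈ S, j < i}`. -/
noncomputable def orderedIncrement (S : Finset ι) (i : ι) : ℝ :=
  F (S.filter (· ≤ i)) - F (S.filter (· < i))

theorem sum_orderedIncrement (S : Finset ι) :
    ∑ i ∈ S, orderedIncrement F S i = F S - F ∅ := by
  induction S using Finset.induction_on_max with
  | empty => simp
  | insert a s hlt ih =>
    have ha : a ∉ s := fun h => lt_irrefl a (hlt a h)
    have hs : ∀ i ∈ s, orderedIncrement F (insert a s) i = orderedIncrement F s i :=
      fun i hi => by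
        rw [orderedIncrement, orderedIncrement, filter_insert, filter_insert,
          if_neg (hlt i hi).not_ge, if_neg (hlt i hi).le.not_gt]
    rw [sum_insert ha, sum_congr rfl hs, ih, orderedIncrement, filter_insert, filter_insert,
      if_pos le_rfl, if_neg (lt_irrefl a), filter_true_of_mem fun j hj => (hlt j hj).le,
      filter_true_of_mem hlt]
    ring

theorem orderedIncrement_le_of_subset
    (hF : ∀ A B, F (A ∪ B) + F (A ∩ B) ≤ F A + F B) {S T : Finset ι} (hST : S ⊆ T) {i : ι}
    (hi : i ∈ S) : orderedIncrement F T i ≤ orderedIncrement F S i := by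
  have hunion : S.filter (· ≤ i) ∪ T.filter (· < i) = T.filter (· ≤ i) := by
    ext j
    simp only [mem_union, mem_filter]
    constructor
    · rintro (⟨hj, hji⟩ | ⟨hj, hji⟩)
      · exact ⟨hST hj, hji⟩
      · exact ⟨hj, hji.le⟩
    · rintro ⟨hj, hji⟩
      rcases hji.lt_or_eq with hji | rfl
      · exact Or.inr ⟨hj, hji⟩
      · exact Or.inl ⟨hi, le_rfl⟩
  have hinter : S.filter (· ≤ i) ∩ T.filter (· < i) = S.filter (· < i) := by
    ext j
    simp only [mem_inter, mem_filter]
    exact ⟨fun h => ⟨h.1.1, h.2.2⟩, fun h => ⟨⟨h.1, h.2.le⟩, hST h.1, h.2⟩⟩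
  have := hF (S.filter (· ≤ i)) (T.filter (· < i))
  rw [hunion, hinter] at this
  rw [orderedIncrement, orderedIncrement]
  linarith

theorem orderedIncrement_nonneg (hF : Monotone F) (S : Finset ι) (i : ι) :
    0 ≤ orderedIncrement F S i :=
  sub_nonneg.mpr (hF (monotone_filter_right S fun _ _ => le_of_lt))

end OrderedIncrement

theorem mul_le_sum_of_submodular {ι κ : Type*} [Fintype ι] [LinearOrder ι] [Fintype κ]
    (F : Finset ι → ℝ) (hF0 : F ∅ = 0) (hmono : Monotone F)
    (hsub : ∀ A B, F (A ∪ B) + F (A ∩ B) ≤ F A + F B) (S : κ → Finset ι) (k : ℕ)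
    (hcov : ∀ i, k ≤ (univ.filter (fun j => i ∈ S j)).card) :
    k * F univ ≤ ∑ j, F (S j) :=
  calc k * F univ = ∑ i, k * orderedIncrement F univ i := by
        rw [← mul_sum, sum_orderedIncrement, hF0, sub_zero]
    _ ≤ ∑ i, (univ.filter (fun j => i ∈ S j)).card * orderedIncrement F univ i := by
        gcongr with i
        · exact orderedIncrement_nonneg F hmono univ i
        · exact hcov i
    _ = ∑ j, ∑ i ∈ S j, orderedIncrement F univ i := by
        simp only [← nsmul_eq_mul, ← sum_const]
        exact sum_comm' fun i j => by simp
    _ ≤ ∑ j, ∑ i ∈ S j, orderedIncrement F (S j) i := by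
        gcongr with j _ i hi
        exact orderedIncrement_le_of_subset F hsub (subset_univ _) hi
    _ = ∑ j, F (S j) := by simp only [sum_orderedIncrement, hF0, sub_zero]

theorem subfamily_eq_iff {Ω ι : Type*} {α : ι → Type*} (X : ∀ i, Ω → α i) {A : Finset ι}
    {ω ω' : Ω} :
    ((fun (i : A) => X i ω) = fun (i : A) => X i ω') ↔ ∀ i ∈ A, X i ω = X i ω' := by
  simp [funext_iff]

section SubfamilyEntropy

variable {Ω ι : Type*} [Fintype Ω] {α : ι → Type*} [∀ i, DecidableEq (α i)]
  {μ : Ω → ℝ} (X : ∀ i, Ω → α i)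

noncomputable def subfamilyEntropy (μ : Ω → ℝ) (A : Finset ι) : ℝ :=
  entropy μ (fun ω (i : A) => X i ω)

theorem subfamilyEntropy_empty (hμ1 : ∑ ω, μ ω = 1) : subfamilyEntropy X μ ∅ = 0 :=
  entropy_of_forall_eq hμ1 fun _ _ => (subfamily_eq_iff X).mpr (by simp)

theorem subfamilyEntropy_mono (hμ0 : ∀ ω, 0 ≤ μ ω) : Monotone (subfamilyEntropy X μ) :=
  fun _ _ hAB => entropy_le_of_determines hμ0 fun _ _ h => by
    rw [subfamily_eq_iff] at h ⊢
    exact fun i hi => h i (hAB hi)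

theorem subfamilyEntropy_union_add_inter_le [DecidableEq ι] (hμ0 : ∀ ω, 0 ≤ μ ω)
    (A B : Finset ι) :
    subfamilyEntropy X μ (A ∪ B) + subfamilyEntropy X μ (A ∩ B) ≤
      subfamilyEntropy X μ A + subfamilyEntropy X μ B := by
  have hpair : subfamilyEntropy X μ (A ∪ B) =
      entropy μ (fun ω => ((fun (i : A) => X i ω), fun (i : B) => X i ω)) :=
    entropy_congr fun _ _ => by
      simp only [subfamily_eq_iff, Prod.mk.injEq, mem_union, or_imp, forall_and]
  rw [hpair]
  exact entropy_pair_add_le hμ0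
    (fun _ _ h => by rw [subfamily_eq_iff] at h ⊢; exact fun i hi => h i (mem_inter.mp hi).1)
    (fun _ _ h => by rw [subfamily_eq_iff] at h ⊢; exact fun i hi => h i (mem_inter.mp hi).2)

theorem entropy_eq_subfamilyEntropy_univ [Fintype ι] :
    entropy μ (fun ω i => X i ω) = subfamilyEntropy X μ univ :=
  entropy_congr fun _ _ => by simp [funext_iff]

end SubfamilyEntropy

theorem shearer_lemma_general {Ω : Type*} [Fintype Ω] {n : ℕ} {α : Fin n → Type*}
    [∀ i, DecidableEq (α i)]
    (μ : Ω → ℝ) (hμ0 : ∀ ω, 0 ≤ μ ω) (hμ1 : ∑ ω, μ ω = 1)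
    (X : ∀ i, Ω → α i) {m : ℕ} (S : Fin m → Finset (Fin n))
    (k : ℕ)
    (hcov : ∀ i : Fin n, k ≤ (Finset.univ.filter (fun j => i ∈ S j)).card) :
    (k : ℝ) * entropy μ (fun ω (i : Fin n) => X i ω)
      ≤ ∑ j, entropy μ (fun ω (i : S j) => X i.1 ω) := by
  rw [entropy_eq_subfamilyEntropy_univ]
  exact mul_le_sum_of_submodular (subfamilyEntropy X μ) (subfamilyEntropy_empty X hμ1)
    (subfamilyEntropy_mono X hμ0) (subfamilyEntropy_union_add_inter_le X hμ0) S k hcov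

/-- **Shearer's lemma.** If every index `i ∈ {1, …, n}` belongs to at least `k ≥ 1` of the
subsets `S 1, …, S m` of `{1, …, n}`, then
`k · H(X₁, …, Xₙ) ≤ ∑ⱼ H(X_{S j})`. -/
theorem shearer_lemma {Ω : Type*} [Fintype Ω] {n : ℕ} {α : Fin n → Type*}
    [∀ i, DecidableEq (α i)]
    (μ : Ω → ℝ) (hμ0 : ∀ ω, 0 ≤ μ ω) (hμ1 : ∑ ω, μ ω = 1)
    (X : ∀ i, Ω → α i) {m : ℕ} (S : Fin m → Finset (Fin n))
    (k : ℕ) (hk : 1 ≤ k)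
    (hcov : ∀ i : Fin n, k ≤ (Finset.univ.filter (fun j => i ∈ S j)).card) :
    (k : ℝ) * entropy μ (fun ω (i : Fin n) => X i ω)
      ≤ ∑ j, entropy μ (fun ω (i : S j) => X i.1 ω) :=
  shearer_lemma_general μ hμ0 hμ1 X S k hcov
end

section
/- Extended Shearer's Lemma: Let X_1, ..., X_n be discrete random variables, and let S_1, ..., S_m be finite sets of positive integers (not necessarily contained in {1, ..., n}) such that every element i in {1, ..., n} belongs to at least k of these subsets (k ≥ 1). Then k · H(X_1, ..., X_n) ≤ Σ_{j=1}^m H(X_{S_j ∩ {1,...,n}}). -/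
open Finset Real

namespace Shearer

variable {Ω : Type*} [Fintype Ω]

/-- probability of the fiber `X = b` -/
noncomputable def fprob (μ : Ω → ℝ) {β : Type*} [DecidableEq β] (X : Ω → β) (b : β) : ℝ :=
  ∑ ω ∈ Finset.univ.filter (fun ω => X ω = b), μ ω

variable {β γ δ : Type*} [DecidableEq β] [DecidableEq γ] [DecidableEq δ]
variable {μ : Ω → ℝ}

lemma entropy_eq (μ : Ω → ℝ) (X : Ω → β) :
    entropy μ X = ∑ b ∈ Finset.univ.image X, Real.negMulLog (fprob μ X b) := by
  rw [entropy, ← Finset.sum_neg_distrib]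
  simp [fprob, Real.negMulLog]

lemma fprob_nonneg (hμ0 : ∀ ω, 0 ≤ μ ω) (X : Ω → β) (b : β) : 0 ≤ fprob μ X b :=
  Finset.sum_nonneg fun ω _ => hμ0 ω

lemma sum_fprob (μ : Ω → ℝ) (X : Ω → β) :
    ∑ b ∈ Finset.univ.image X, fprob μ X b = ∑ ω, μ ω :=
  Finset.sum_fiberwise_of_maps_to (fun ω _ => Finset.mem_image_of_mem X (Finset.mem_univ ω)) μ

lemma fprob_le_one (hμ0 : ∀ ω, 0 ≤ μ ω) (hμ1 : ∑ ω, μ ω = 1) (X : Ω → β) (b : β) :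
    fprob μ X b ≤ 1 := by
  rw [← hμ1]
  exact Finset.sum_le_sum_of_subset_of_nonneg (Finset.filter_subset _ _) fun ω _ _ => hμ0 ω

lemma entropy_nonneg (hμ0 : ∀ ω, 0 ≤ μ ω) (hμ1 : ∑ ω, μ ω = 1) (X : Ω → β) :
    0 ≤ entropy μ X := by
  rw [entropy_eq]
  exact Finset.sum_nonneg fun b _ =>
    Real.negMulLog_nonneg (fprob_nonneg hμ0 X b) (fprob_le_one hμ0 hμ1 X b)

lemma fprob_comp (μ : Ω → ℝ) (f : β → δ) (W : Ω → β) (y : δ) :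
    fprob μ (fun ω => f (W ω)) y
      = ∑ b ∈ (Finset.univ.image W).filter (fun b => f b = y), fprob μ W b := by
  have h := Finset.sum_fiberwise_of_maps_to
    (s := Finset.univ.filter (fun ω => f (W ω) = y))
    (t := (Finset.univ.image W).filter (fun b => f b = y)) (g := W)
    (fun ω hω => by
      simp only [Finset.mem_filter, Finset.mem_univ, true_and] at hω ⊢
      exact ⟨Finset.mem_image_of_mem W (Finset.mem_univ ω), hω⟩) μ
  rw [fprob, ← h]
  refine Finset.sum_congr rfl fun b hb => ?_
  simp only [Finset.mem_filter, Finset.mem_univ, true_and] at hb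
  rw [fprob]
  congr 1
  ext ω
  simp only [Finset.mem_filter, Finset.mem_univ, true_and]
  constructor
  · rintro ⟨-, h2⟩; exact h2
  · intro h2; exact ⟨h2 ▸ hb.2, h2⟩

lemma fprob_le_fprob_comp (hμ0 : ∀ ω, 0 ≤ μ ω) (f : β → δ) (W : Ω → β) (b : β) :
    fprob μ W b ≤ fprob μ (fun ω => f (W ω)) (f b) := by
  refine Finset.sum_le_sum_of_subset_of_nonneg ?_ fun ω _ _ => hμ0 ω
  intro ω hω
  simp only [Finset.mem_filter, Finset.mem_univ, true_and] at hω ⊢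
  rw [hω]

lemma negMulLog_sum_le {ι : Type*} (s : Finset ι) (p : ι → ℝ) (hp : ∀ i ∈ s, 0 ≤ p i) :
    Real.negMulLog (∑ i ∈ s, p i) ≤ ∑ i ∈ s, Real.negMulLog (p i) := by
  have key : Real.negMulLog (∑ i ∈ s, p i)
      = ∑ i ∈ s, -(p i * Real.log (∑ j ∈ s, p j)) := by
    rw [Real.negMulLog, neg_mul, Finset.sum_mul, ← Finset.sum_neg_distrib]
  rw [key]
  refine Finset.sum_le_sum fun i hi => ?_
  rw [Real.negMulLog, neg_mul, neg_le_neg_iff]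
  rcases eq_or_lt_of_le (hp i hi) with h0 | h0
  · simp [← h0]
  · exact mul_le_mul_of_nonneg_left
      (Real.log_le_log h0 (Finset.single_le_sum hp hi)) (hp i hi)

lemma entropy_comp_le (hμ0 : ∀ ω, 0 ≤ μ ω) (f : β → δ) (W : Ω → β) :
    entropy μ (fun ω => f (W ω)) ≤ entropy μ W := by
  rw [entropy_eq, entropy_eq]
  have hmaps : ∀ b ∈ Finset.univ.image W,
      f b ∈ Finset.univ.image (fun ω => f (W ω)) := by
    intro b hb
    obtain ⟨ω, -, rfl⟩ := Finset.mem_image.mp hb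
    exact Finset.mem_image_of_mem _ (Finset.mem_univ ω)
  rw [← Finset.sum_fiberwise_of_maps_to hmaps (fun b => Real.negMulLog (fprob μ W b))]
  refine Finset.sum_le_sum fun y _ => ?_
  rw [fprob_comp]
  exact negMulLog_sum_le _ _ fun b _ => fprob_nonneg hμ0 W b

lemma entropy_congr (μ : Ω → ℝ) (X : Ω → β) (Y : Ω → γ)
    (h : ∀ ω ω', X ω = X ω' ↔ Y ω = Y ω') : entropy μ X = entropy μ Y := by
  rw [entropy_eq, entropy_eq]
  refine Finset.sum_bij (fun b hb => Y (Finset.mem_image.mp hb).choose) ?_ ?_ ?_ ?_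
  · intro b hb
    exact Finset.mem_image_of_mem _ (Finset.mem_univ _)
  · intro b1 hb1 b2 hb2 heq
    have h1 := (Finset.mem_image.mp hb1).choose_spec.2
    have h2 := (Finset.mem_image.mp hb2).choose_spec.2
    rw [← h1, ← h2]
    exact (h _ _).mpr heq
  · intro c hc
    obtain ⟨ω, -, rfl⟩ := Finset.mem_image.mp hc
    refine ⟨X ω, Finset.mem_image_of_mem _ (Finset.mem_univ ω), ?_⟩
    have h1 := (Finset.mem_image.mp
      (Finset.mem_image_of_mem X (Finset.mem_univ ω))).choose_spec.2
    exact ((h _ _).mp h1).symm ▸ rfl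
  · intro b hb
    have h1 := (Finset.mem_image.mp hb).choose_spec.2
    congr 1
    rw [fprob, fprob]
    congr 1
    refine Finset.filter_congr fun ω _ => ?_
    constructor
    · exact fun h2 => (h _ _).mp (h2.trans h1.symm)
    · exact fun h2 => ((h _ _).mpr h2).trans h1
/-- regroup a sum over the image of a pushforward -/
lemma sum_image_mul_comp (μ : Ω → ℝ) (f : β → δ) (W : Ω → β) (F : δ → ℝ) :
    ∑ y ∈ Finset.univ.image (fun ω => f (W ω)), fprob μ (fun ω => f (W ω)) y * F y
      = ∑ b ∈ Finset.univ.image W, fprob μ W b * F (f b) := by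
  have hmaps : ∀ b ∈ Finset.univ.image W,
      f b ∈ Finset.univ.image (fun ω => f (W ω)) := by
    intro b hb
    obtain ⟨ω, -, rfl⟩ := Finset.mem_image.mp hb
    exact Finset.mem_image_of_mem _ (Finset.mem_univ ω)
  rw [← Finset.sum_fiberwise_of_maps_to hmaps (fun b => fprob μ W b * F (f b))]
  refine Finset.sum_congr rfl fun y _ => ?_
  rw [fprob_comp, Finset.sum_mul]
  refine Finset.sum_congr rfl fun b hb => ?_
  rw [(Finset.mem_filter.mp hb).2]



lemma entropy_comp_eq_sum (μ : Ω → ℝ) (h' : β → δ) (W : Ω → β) :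
    entropy μ (fun ω => h' (W ω))
      = ∑ c ∈ Finset.univ.image W,
          fprob μ W c * (-Real.log (fprob μ (fun ω => h' (W ω)) (h' c))) := by
  rw [entropy_eq]
  have e1 : ∀ y ∈ Finset.univ.image (fun ω => h' (W ω)),
      Real.negMulLog (fprob μ (fun ω => h' (W ω)) y)
        = fprob μ (fun ω => h' (W ω)) y * (-Real.log (fprob μ (fun ω => h' (W ω)) y)) := by
    intro y _; rw [Real.negMulLog]; ring
  rw [Finset.sum_congr rfl e1]
  exact sum_image_mul_comp μ h' W (fun y => -Real.log (fprob μ (fun ω => h' (W ω)) y))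

set_option maxHeartbeats 1000000 in
/-- **submodularity-type inequality**: `H(Z,W) + H(f∘W) ≤ H(Z,f∘W) + H(W)`. -/
lemma entropy_pair_add_comp_le (hμ0 : ∀ ω, 0 ≤ μ ω) (hμ1 : ∑ ω, μ ω = 1)
    (Z : Ω → γ) (W : Ω → β) (f : β → δ) :
    entropy μ (fun ω => (Z ω, W ω)) + entropy μ (fun ω => f (W ω))
      ≤ entropy μ (fun ω => (Z ω, f (W ω))) + entropy μ W := by
  classical
  set ZW : Ω → γ × β := fun ω => (Z ω, W ω) with hZW
  set g₁ : γ × β → γ × δ := fun c => (c.1, f c.2) with hg₁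
  set P : γ × β → ℝ := fprob μ ZW with hP
  set Q : β → ℝ := fprob μ (fun ω => (ZW ω).2) with hQ
  set R : γ × δ → ℝ := fprob μ (fun ω => g₁ (ZW ω)) with hR
  set T : δ → ℝ := fprob μ (fun ω => f ((ZW ω).2)) with hT
  set I : Finset (γ × β) := Finset.univ.image ZW with hI
  -- rewrite the four entropies as sums over I
  have eA : entropy μ ZW = ∑ c ∈ I, P c * (-Real.log (P c)) := by
    rw [entropy_eq]
    refine Finset.sum_congr rfl fun c _ => ?_
    rw [Real.negMulLog]; ring
  have eB : entropy μ (fun ω => f (W ω)) = ∑ c ∈ I, P c * (-Real.log (T (f c.2))) :=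
    entropy_comp_eq_sum μ (fun c => f c.2) ZW
  have eC : entropy μ (fun ω => (Z ω, f (W ω))) = ∑ c ∈ I, P c * (-Real.log (R (g₁ c))) :=
    entropy_comp_eq_sum μ g₁ ZW
  have eD : entropy μ W = ∑ c ∈ I, P c * (-Real.log (Q c.2)) :=
    entropy_comp_eq_sum μ Prod.snd ZW
  rw [eA, eB, eC, eD]
  -- the quantity to bound
  set a : γ × β → ℝ := fun c => Q c.2 * R (g₁ c) / T (f c.2) with ha
  have hQnn : ∀ b, 0 ≤ Q b := fun b => fprob_nonneg hμ0 _ b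
  have hRnn : ∀ d, 0 ≤ R d := fun d => fprob_nonneg hμ0 _ d
  have hTnn : ∀ y, 0 ≤ T y := fun y => fprob_nonneg hμ0 _ y
  have hPnn : ∀ c, 0 ≤ P c := fun c => fprob_nonneg hμ0 _ c
  have hann : ∀ c, 0 ≤ a c := fun c =>
    div_nonneg (mul_nonneg (hQnn _) (hRnn _)) (hTnn _)
  suffices hmain : ∑ c ∈ I, P c * (Real.log (Q c.2) + Real.log (R (g₁ c))
      - Real.log (T (f c.2)) - Real.log (P c)) ≤ 0 by
    have combine : ∑ c ∈ I, P c * (Real.log (Q c.2) + Real.log (R (g₁ c))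
          - Real.log (T (f c.2)) - Real.log (P c))
        = (∑ c ∈ I, P c * (-Real.log (P c)) + ∑ c ∈ I, P c * (-Real.log (T (f c.2))))
          - (∑ c ∈ I, P c * (-Real.log (R (g₁ c))) + ∑ c ∈ I, P c * (-Real.log (Q c.2))) := by
      rw [← Finset.sum_add_distrib, ← Finset.sum_add_distrib, ← Finset.sum_sub_distrib]
      exact Finset.sum_congr rfl fun c _ => by ring
    linarith [combine ▸ hmain]
  -- restrict to the support
  set sup : Finset (γ × β) := I.filter (fun c => 0 < P c) with hsup
  have hsupsub : sup ⊆ I := Finset.filter_subset _ _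
  have hrestrict : ∀ (F : γ × β → ℝ), (∀ c, F c = P c * (F c / P c)) → True := fun _ _ => trivial
  have hsum_eq : ∑ c ∈ I, P c * (Real.log (Q c.2) + Real.log (R (g₁ c))
        - Real.log (T (f c.2)) - Real.log (P c))
      = ∑ c ∈ sup, P c * (Real.log (Q c.2) + Real.log (R (g₁ c))
        - Real.log (T (f c.2)) - Real.log (P c)) := by
    refine (Finset.sum_filter_of_ne fun c _ hne => ?_).symm
    refine (hPnn c).lt_of_ne fun h0 => hne ?_
    rw [← h0, zero_mul]
  rw [hsum_eq]
  -- positivity on the support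
  have hposQ : ∀ c ∈ sup, 0 < Q c.2 := by
    intro c hc
    have h1 : P c ≤ Q c.2 := fprob_le_fprob_comp hμ0 Prod.snd ZW c
    exact lt_of_lt_of_le (Finset.mem_filter.mp hc).2 h1
  have hposR : ∀ c ∈ sup, 0 < R (g₁ c) := by
    intro c hc
    have h1 : P c ≤ R (g₁ c) := fprob_le_fprob_comp hμ0 g₁ ZW c
    exact lt_of_lt_of_le (Finset.mem_filter.mp hc).2 h1
  have hposT : ∀ c ∈ sup, 0 < T (f c.2) := by
    intro c hc
    have h1 : Q c.2 ≤ T (f c.2) := fprob_le_fprob_comp hμ0 f (fun ω => (ZW ω).2) c.2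
    exact lt_of_lt_of_le (hposQ c hc) h1
  have hposP : ∀ c ∈ sup, 0 < P c := fun c hc => (Finset.mem_filter.mp hc).2
  have hposa : ∀ c ∈ sup, 0 < a c := fun c hc =>
    div_pos (mul_pos (hposQ c hc) (hposR c hc)) (hposT c hc)
  -- rewrite each term using log of the ratio
  have hterm : ∀ c ∈ sup, P c * (Real.log (Q c.2) + Real.log (R (g₁ c))
        - Real.log (T (f c.2)) - Real.log (P c)) = P c * Real.log (a c / P c) := by
    intro c hc
    rw [Real.log_div (hposa c hc).ne' (hposP c hc).ne', ha,
      Real.log_div (mul_pos (hposQ c hc) (hposR c hc)).ne' (hposT c hc).ne',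
      Real.log_mul (hposQ c hc).ne' (hposR c hc).ne']
  rw [Finset.sum_congr rfl hterm]
  -- total mass of the support is 1
  have hPsum : ∑ c ∈ sup, P c = 1 := by
    have h1 : ∑ c ∈ sup, P c = ∑ c ∈ I, P c :=
      Finset.sum_filter_of_ne fun c _ hne => (hPnn c).lt_of_ne (Ne.symm hne)
    rw [h1, hP, hI, sum_fprob, hμ1]
  -- Jensen for log
  have jensen := (strictConcaveOn_log_Ioi.concaveOn).le_map_sum
    (t := sup) (w := fun c => P c) (p := fun c => a c / P c)
    (fun c hc => hPnn c) hPsum (fun c hc => Set.mem_Ioi.mpr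
      (div_pos (hposa c hc) (hposP c hc)))
  simp only [smul_eq_mul] at jensen
  have hPa : ∑ c ∈ sup, P c * (a c / P c) = ∑ c ∈ sup, a c := by
    refine Finset.sum_congr rfl fun c hc => ?_
    rw [mul_comm, div_mul_cancel₀ _ (hposP c hc).ne']
  rw [hPa] at jensen
  refine le_trans jensen ?_
  -- it remains to show log (∑ a) ≤ 0, i.e. ∑_{sup} a ≤ 1
  have hsa : ∑ c ∈ sup, a c ≤ 1 := by
    have h1 : ∑ c ∈ sup, a c ≤ ∑ c ∈ I, a c :=
      Finset.sum_le_sum_of_subset_of_nonneg hsupsub fun c _ _ => hann c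
    refine le_trans h1 ?_
    have hmaps2 : ∀ c ∈ I, g₁ c ∈ Finset.univ.image (fun ω => g₁ (ZW ω)) := by
      intro c hc
      obtain ⟨ω, -, rfl⟩ := Finset.mem_image.mp hc
      exact Finset.mem_image_of_mem _ (Finset.mem_univ ω)
    rw [← Finset.sum_fiberwise_of_maps_to hmaps2 a]
    have hinner : ∀ d ∈ Finset.univ.image (fun ω => g₁ (ZW ω)),
        ∑ c ∈ I.filter (fun c => g₁ c = d), a c ≤ R d := by
      intro d _
      have hsumQ : ∑ c ∈ I.filter (fun c => g₁ c = d), Q c.2 ≤ T d.2 := by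
        have hinj : ∀ c ∈ I.filter (fun c => g₁ c = d),
            ∀ c' ∈ I.filter (fun c => g₁ c = d), c.2 = c'.2 → c = c' := by
          intro c hc c' hc' h2
          have hgc := (Finset.mem_filter.mp hc).2
          have hgc' := (Finset.mem_filter.mp hc').2
          have h1 : c.1 = d.1 := by rw [← hgc]
          have h1' : c'.1 = d.1 := by rw [← hgc']
          exact Prod.ext (h1.trans h1'.symm) h2
        have himg := (Finset.sum_image (f := Q) hinj).symm
        rw [himg]
        have hT2 : T d.2 = ∑ b ∈ (Finset.univ.image (fun ω => (ZW ω).2)).filter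
            (fun b => f b = d.2), Q b := fprob_comp μ f (fun ω => (ZW ω).2) d.2
        rw [hT2]
        refine Finset.sum_le_sum_of_subset_of_nonneg ?_ fun b _ _ => hQnn b
        intro b hb
        obtain ⟨c, hc, rfl⟩ := Finset.mem_image.mp hb
        have hcI := (Finset.mem_filter.mp hc).1
        have hgc := (Finset.mem_filter.mp hc).2
        obtain ⟨ω, -, rfl⟩ := Finset.mem_image.mp hcI
        refine Finset.mem_filter.mpr ⟨Finset.mem_image_of_mem _ (Finset.mem_univ ω), ?_⟩
        rw [← hgc]
      have hcongr : ∀ c ∈ I.filter (fun c => g₁ c = d), a c = Q c.2 * R d / T d.2 := by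
        intro c hc
        have hgc := (Finset.mem_filter.mp hc).2
        have hf2 : f c.2 = d.2 := by rw [← hgc]
        rw [ha]
        simp only
        rw [hgc, hf2]
      rw [Finset.sum_congr rfl hcongr]
      have : ∑ c ∈ I.filter (fun c => g₁ c = d), Q c.2 * R d / T d.2
          = (∑ c ∈ I.filter (fun c => g₁ c = d), Q c.2) * R d / T d.2 := by
        rw [← Finset.sum_div, ← Finset.sum_mul]
      rw [this]
      rcases eq_or_lt_of_le (hTnn d.2) with h0 | h0
      · rw [← h0, div_zero]; exact hRnn d
      · rw [div_le_iff₀ h0]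
        calc (∑ c ∈ I.filter (fun c => g₁ c = d), Q c.2) * R d
            ≤ T d.2 * R d := by
              refine mul_le_mul_of_nonneg_right hsumQ (hRnn d)
          _ = R d * T d.2 := mul_comm _ _
    refine le_trans (Finset.sum_le_sum hinner) ?_
    rw [hR, sum_fprob, hμ1]
  refine Real.log_nonpos ?_ hsa
  exact Finset.sum_nonneg fun c _ => hann c
lemma entropy_const (hμ1 : ∑ ω, μ ω = 1) (X : Ω → β) (h : ∀ ω ω', X ω = X ω') :
    entropy μ X = 0 := by
  have hΩ : Nonempty Ω := by
    by_contra h0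
    rw [not_nonempty_iff] at h0
    rw [Finset.univ_eq_empty, Finset.sum_empty] at hμ1
    exact one_ne_zero hμ1.symm
  obtain ⟨ω₀⟩ := hΩ
  have himg : Finset.univ.image X = {X ω₀} := by
    ext b
    simp only [Finset.mem_image, Finset.mem_univ, true_and, Finset.mem_singleton]
    exact ⟨fun ⟨ω, hω⟩ => hω ▸ h ω ω₀, fun hb => ⟨ω₀, hb.symm⟩⟩
  have hfil : Finset.univ.filter (fun ω => X ω = X ω₀) = Finset.univ :=
    Finset.filter_true_of_mem fun ω _ => h ω ω₀
  rw [entropy_eq, himg, Finset.sum_singleton, fprob, hfil, hμ1, Real.negMulLog_one]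

section comb
variable {n : ℕ} {α : ℕ → Type*} [∀ i, DecidableEq (α i)]

noncomputable def EF (μ : Ω → ℝ) (X : ∀ i, Ω → α i) (T : Finset ℕ) : ℝ :=
  entropy μ (fun ω (i : (T : Finset ℕ)) => X i.1 ω)

variable (μ : Ω → ℝ) (X : ∀ i, Ω → α i)

lemma EF_mono (hμ0 : ∀ ω, 0 ≤ μ ω) {T U : Finset ℕ} (hTU : T ⊆ U) :
    EF μ X T ≤ EF μ X U :=
  entropy_comp_le hμ0
    (fun (g : ∀ i : (U : Finset ℕ), α i.1) (i : (T : Finset ℕ)) => g ⟨i.1, hTU i.2⟩)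
    (fun ω (i : (U : Finset ℕ)) => X i.1 ω)

lemma EF_pair (i : ℕ) (T : Finset ℕ) :
    entropy μ (fun ω => (X i ω, fun j : (T : Finset ℕ) => X j.1 ω))
      = EF μ X (insert i T) := by
  apply entropy_congr
  intro ω ω'
  simp only [Prod.mk.injEq, funext_iff, Subtype.forall, Finset.mem_insert]
  constructor
  · rintro ⟨h1, h2⟩ a (rfl | ha)
    · exact h1
    · exact h2 a ha
  · intro hh
    exact ⟨hh i (Or.inl rfl), fun a ha => hh a (Or.inr ha)⟩

lemma EF_diff_le (hμ0 : ∀ ω, 0 ≤ μ ω) (hμ1 : ∑ ω, μ ω = 1) (i : ℕ)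
    {T U : Finset ℕ} (hTU : T ⊆ U) :
    EF μ X (insert i U) + EF μ X T ≤ EF μ X (insert i T) + EF μ X U := by
  have h := entropy_pair_add_comp_le hμ0 hμ1 (X i)
    (fun ω (j : (U : Finset ℕ)) => X j.1 ω)
    (fun (g : ∀ j : (U : Finset ℕ), α j.1) (j : (T : Finset ℕ)) => g ⟨j.1, hTU j.2⟩)
  rw [← EF_pair μ X i U, ← EF_pair μ X i T]
  exact h

lemma EF_empty (hμ1 : ∑ ω, μ ω = 1) : EF μ X ∅ = 0 :=
  entropy_const hμ1 _ fun ω ω' =>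
    funext fun j => absurd j.2 (Finset.notMem_empty j.1)

lemma EF_chain (hμ0 : ∀ ω, 0 ≤ μ ω) (hμ1 : ∑ ω, μ ω = 1) :
    ∀ (N : ℕ) (R : Finset ℕ), R ⊆ Finset.Icc 1 N →
      ∑ i ∈ R, (EF μ X (Finset.Icc 1 i) - EF μ X (Finset.Icc 1 (i - 1))) ≤ EF μ X R := by
  intro N
  induction N with
  | zero =>
    intro R hR
    have hR0 : R = ∅ := Finset.subset_empty.mp (by simpa using hR)
    subst hR0
    rw [Finset.sum_empty, EF_empty μ X hμ1]
  | succ N ih =>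
    intro R hR
    by_cases hmem : N + 1 ∈ R
    · have hR' : R.erase (N + 1) ⊆ Finset.Icc 1 N := by
        intro x hx
        have h1 := Finset.mem_of_mem_erase hx
        have h2 := Finset.ne_of_mem_erase hx
        have h3 := Finset.mem_Icc.mp (hR h1)
        rw [Finset.mem_Icc]
        omega
      have hins : R = insert (N + 1) (R.erase (N + 1)) := (Finset.insert_erase hmem).symm
      have hIccN : Finset.Icc 1 (N + 1) = insert (N + 1) (Finset.Icc 1 N) := by
        ext x
        simp only [Finset.mem_Icc, Finset.mem_insert]
        omega
      have hstep := EF_diff_le μ X hμ0 hμ1 (N + 1) hR'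
      have hsum := ih (R.erase (N + 1)) hR'
      rw [hins, Finset.sum_insert (Finset.notMem_erase _ _)]
      simp only [Nat.add_sub_cancel]
      rw [hIccN]
      linarith
    · refine ih R fun x hx => ?_
      have h3 := Finset.mem_Icc.mp (hR hx)
      have : x ≠ N + 1 := fun h => hmem (h ▸ hx)
      rw [Finset.mem_Icc]
      omega

lemma EF_telescope (hμ1 : ∑ ω, μ ω = 1) (n : ℕ) :
    ∑ i ∈ Finset.Icc 1 n, (EF μ X (Finset.Icc 1 i) - EF μ X (Finset.Icc 1 (i - 1)))
      = EF μ X (Finset.Icc 1 n) := by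
  induction n with
  | zero =>
    rw [show Finset.Icc 1 0 = (∅ : Finset ℕ) from rfl, Finset.sum_empty,
      EF_empty μ X hμ1]
  | succ n ih =>
    have hIccN : Finset.Icc 1 (n + 1) = insert (n + 1) (Finset.Icc 1 n) := by
      ext x
      simp only [Finset.mem_Icc, Finset.mem_insert]
      omega
    have hnm : n + 1 ∉ Finset.Icc 1 n := by
      rw [Finset.mem_Icc]; omega
    rw [hIccN, Finset.sum_insert hnm, Nat.add_sub_cancel, ih, hIccN]
    linarith

end comb
end Shearer

/-- **Extended Shearer's lemma.** Let `X₁, …, Xₙ` be discrete random variables, and let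
`S 1, …, S m` be finite sets of positive integers (not necessarily contained in
`{1, …, n}`) such that every `i ∈ {1, …, n}` belongs to at least `k ≥ 1` of them. Then
`k · H(X₁, …, Xₙ) ≤ ∑ⱼ H(X_{S j ∩ {1, …, n}})`. -/
theorem extended_shearer_lemma {Ω : Type*} [Fintype Ω] {n : ℕ} {α : ℕ → Type*}
    [∀ i, DecidableEq (α i)]
    (μ : Ω → ℝ) (hμ0 : ∀ ω, 0 ≤ μ ω) (hμ1 : ∑ ω, μ ω = 1)
    (X : ∀ i, Ω → α i) {m : ℕ} (S : Fin m → Finset ℕ)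
    (hpos : ∀ j, ∀ i ∈ S j, 0 < i)
    (k : ℕ) (hk : 1 ≤ k)
    (hcov : ∀ i ∈ Finset.Icc 1 n, k ≤ (Finset.univ.filter (fun j => i ∈ S j)).card) :
    (k : ℝ) * entropy μ (fun ω (i : (Finset.Icc 1 n : Finset ℕ)) => X i.1 ω)
      ≤ ∑ j, entropy μ (fun ω (i : (S j ∩ Finset.Icc 1 n : Finset ℕ)) => X i.1 ω) := by
  classical
  set h : ℕ → ℝ :=
    fun i => Shearer.EF μ X (Finset.Icc 1 i) - Shearer.EF μ X (Finset.Icc 1 (i - 1)) with hh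
  have hnn : ∀ i, 0 ≤ h i := fun i =>
    sub_nonneg.mpr (Shearer.EF_mono μ X hμ0
      (Finset.Icc_subset_Icc_right (Nat.sub_le i 1)))
  have htel : ∑ i ∈ Finset.Icc 1 n, h i = Shearer.EF μ X (Finset.Icc 1 n) :=
    Shearer.EF_telescope μ X hμ1 n
  have hL : entropy μ (fun ω (i : (Finset.Icc 1 n : Finset ℕ)) => X i.1 ω)
      = Shearer.EF μ X (Finset.Icc 1 n) := rfl
  rw [hL, ← htel, Finset.mul_sum]
  calc ∑ i ∈ Finset.Icc 1 n, (k : ℝ) * h i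
      ≤ ∑ i ∈ Finset.Icc 1 n,
          ((Finset.univ.filter (fun j => i ∈ S j)).card : ℝ) * h i := by
        refine Finset.sum_le_sum fun i hi => ?_
        exact mul_le_mul_of_nonneg_right (Nat.cast_le.mpr (hcov i hi)) (hnn i)
    _ = ∑ i ∈ Finset.Icc 1 n, ∑ j ∈ Finset.univ.filter (fun j => i ∈ S j), h i := by
        refine Finset.sum_congr rfl fun i _ => ?_
        rw [Finset.sum_const, nsmul_eq_mul]
    _ = ∑ i ∈ Finset.Icc 1 n, ∑ j : Fin m, if i ∈ S j then h i else 0 := by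
        refine Finset.sum_congr rfl fun i _ => ?_
        rw [Finset.sum_filter]
    _ = ∑ j : Fin m, ∑ i ∈ Finset.Icc 1 n, if i ∈ S j then h i else 0 :=
        Finset.sum_comm
    _ = ∑ j : Fin m, ∑ i ∈ S j ∩ Finset.Icc 1 n, h i := by
        refine Finset.sum_congr rfl fun j _ => ?_
        rw [← Finset.sum_filter]
        congr 1
        rw [Finset.filter_mem_eq_inter, Finset.inter_comm]
    _ ≤ ∑ j : Fin m, Shearer.EF μ X (S j ∩ Finset.Icc 1 n) := by
        refine Finset.sum_le_sum fun j _ => ?_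
        exact Shearer.EF_chain μ X hμ0 hμ1 n (S j ∩ Finset.Icc 1 n)
          Finset.inter_subset_right
    _ = ∑ j, entropy μ (fun ω (i : (S j ∩ Finset.Icc 1 n : Finset ℕ)) => X i.1 ω) := rfl
end

section
/- Kahn's theorem: If G is a bipartite d-regular simple graph with n vertices (d ≥ 1), then the number of independent sets of G satisfies |I(G)| ≤ (2^{d+1} - 1)^{n/(2d)}. -/
/-! Split the vertices along a 2-colouring into `A` and `B = Aᶜ`. An independent set is a set
`S ⊆ A` together with an arbitrary set of vertices of `B` without neighbours in `S`, so
`|I(G)| = ∑_{S ⊆ A} ∏_{v ∈ B} g (S ∩ N(v))` with `g ∅ = 2` and `g T = 1` otherwise. Each vertex of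
`A` lies in exactly `d` of the neighbourhoods `N(v)`, `v ∈ B`, so Finner's form of Hölder's
inequality gives `|I(G)|^d ≤ ∏_{v ∈ B} ∑_{T ⊆ N(v)} g(T)^d = (2^(d+1) - 1)^|B|`. Multiplying by the
same bound with `A` and `B` exchanged gives `|I(G)|^(2d) ≤ (2^(d+1) - 1)^n`. -/

/-- The finite set of all independent sets of a finite graph `G`
(including the empty set): subsets of vertices no two of which are adjacent. -/
def indSets {V : Type*} [Fintype V] [DecidableEq V]
    (G : SimpleGraph V) [DecidableRel G.Adj] : Finset (Finset V) :=
  Finset.univ.filter fun s => ∀ u ∈ s, ∀ v ∈ s, ¬ G.Adj u v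

open Finset
open scoped NNReal

namespace NNReal

theorem card_mul_prod_le_sum_pow_card {ι : Type*} (s : Finset ι) (a : ι → ℝ≥0) :
    #s * ∏ i ∈ s, a i ≤ ∑ i ∈ s, a i ^ #s := by
  rcases s.eq_empty_or_nonempty with rfl | hs
  · simp
  have hn : (#s : ℝ≥0) ≠ 0 := by simpa using hs.ne_empty
  have amgm := geom_mean_le_arith_mean_weighted s (fun _ => (#s : ℝ≥0)⁻¹) (fun i => a i ^ #s)
    (by simp [hn])
  simp only [NNReal.coe_inv, NNReal.coe_natCast,
    pow_rpow_inv_natCast _ (card_ne_zero.2 hs)] at amgm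
  rw [← mul_sum, ← div_eq_inv_mul, le_div_iff₀' (pos_iff_ne_zero.2 hn)] at amgm
  exact amgm

theorem sum_prod_le_prod_sum_pow_card {ι X : Type*} (s : Finset ι) (hs : s.Nonempty)
    (t : Finset X) (f : ι → X → ℝ≥0) :
    ∑ x ∈ t, ∏ i ∈ s, f i x ≤ ∏ i ∈ s, (∑ x ∈ t, f i x ^ #s) ^ ((#s : ℝ)⁻¹) := by
  set n := #s
  have hn : n ≠ 0 := by simpa [n] using hs.ne_empty
  set c : ι → ℝ≥0 := fun i => (∑ x ∈ t, f i x ^ n) ^ ((n : ℝ)⁻¹)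
  by_cases hc : ∃ i ∈ s, c i = 0
  · obtain ⟨i, hi, hci⟩ := hc
    have hfi : ∀ x ∈ t, f i x = 0 := by
      simpa [c, hn, sum_eq_zero_iff] using hci
    rw [sum_eq_zero fun x hx => prod_eq_zero hi (hfi x hx)]
    exact zero_le
  push Not at hc
  have hcn : ∀ i ∈ s, c i ^ n = ∑ x ∈ t, f i x ^ n := fun i _ => rpow_inv_natCast_pow _ hn
  have hP : ∏ i ∈ s, c i ≠ 0 := prod_ne_zero_iff.2 hc
  have key : n * ∑ x ∈ t, ∏ i ∈ s, f i x ≤ n * ∏ i ∈ s, c i := calc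
    n * ∑ x ∈ t, ∏ i ∈ s, f i x
      = (∏ i ∈ s, c i) * ∑ x ∈ t, n * ∏ i ∈ s, (f i x / c i) := by
        simp only [prod_div_distrib, mul_sum]
        refine sum_congr rfl fun x _ => ?_
        rw [mul_left_comm, mul_div_cancel₀ _ hP]
    _ ≤ (∏ i ∈ s, c i) * ∑ x ∈ t, ∑ i ∈ s, (f i x / c i) ^ n := by
        gcongr with x
        exact card_mul_prod_le_sum_pow_card s _
    _ = (∏ i ∈ s, c i) * n := by
        rw [sum_comm]
        congr 1
        simp only [div_pow, ← sum_div]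
        rw [sum_congr rfl fun i hi => by rw [← hcn i hi, div_self (pow_ne_zero _ (hc i hi))]]
        simp [n]
    _ = n * ∏ i ∈ s, c i := mul_comm _ _
  exact le_of_mul_le_mul_left key (by positivity)

theorem prod_add_prod_le_prod_add_pow_card {ι : Type*} (s : Finset ι) (hs : s.Nonempty)
    (a b : ι → ℝ≥0) :
    ∏ i ∈ s, a i + ∏ i ∈ s, b i ≤ ∏ i ∈ s, (a i ^ #s + b i ^ #s) ^ ((#s : ℝ)⁻¹) := by
  simpa [Fintype.sum_bool, add_comm] using
    sum_prod_le_prod_sum_pow_card s hs univ fun i (x : Bool) => cond x (a i) (b i)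

end NNReal

open NNReal

section Finner

variable {ι α : Type*} [DecidableEq α]

noncomputable def fiberLpNorm (d : ℕ) (u : α) (g : Finset α → ℝ≥0) (T : Finset α) : ℝ≥0 :=
  (g T ^ d + g (insert u T) ^ d) ^ ((d : ℝ)⁻¹)

theorem sum_powerset_erase_fiberLpNorm_pow {d : ℕ} (hd : d ≠ 0) {u : α} {N : Finset α}
    (hu : u ∈ N) (g : Finset α → ℝ≥0) :
    ∑ T ∈ (N.erase u).powerset, fiberLpNorm d u g T ^ d = ∑ T ∈ N.powerset, g T ^ d := by
  conv_rhs => rw [← insert_erase hu]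
  rw [sum_powerset_insert (notMem_erase u N), ← sum_add_distrib]
  simp only [fiberLpNorm, rpow_inv_natCast_pow _ hd]

theorem prod_add_prod_insert_le (s : Finset ι) (N : ι → Finset α) (g : ι → Finset α → ℝ≥0)
    {d : ℕ} (hd : d ≠ 0) {u : α} (hu : #{i ∈ s | u ∈ N i} = d) {S : Finset α} (huS : u ∉ S) :
    ∏ i ∈ s, g i (S ∩ N i) + ∏ i ∈ s, g i (insert u S ∩ N i) ≤
      ∏ i ∈ s, (if u ∈ N i then fiberLpNorm d u (g i) else g i) (S ∩ (N i).erase u) := by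
  set h : ι → Finset α → ℝ≥0 := fun i => if u ∈ N i then fiberLpNorm d u (g i) else g i
  have herase : ∀ i, S ∩ (N i).erase u = S ∩ N i := fun i => by
    rw [inter_erase, erase_eq_of_notMem fun huSN => huS (mem_inter.1 huSN).1]
  have hout : ∀ i ∈ s.filter (fun i => u ∉ N i),
      g i (insert u S ∩ N i) = g i (S ∩ N i) ∧ h i (S ∩ (N i).erase u) = g i (S ∩ N i) :=
    fun i hi => by
      have hui := (mem_filter.1 hi).2
      simp only [h, if_neg hui, herase, insert_inter_of_notMem hui, and_self]
  have hin : ∏ i ∈ s with u ∈ N i, h i (S ∩ (N i).erase u) =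
      ∏ i ∈ s with u ∈ N i, (g i (S ∩ N i) ^ d + g i (insert u S ∩ N i) ^ d) ^ ((d : ℝ)⁻¹) :=
    prod_congr rfl fun i hi => by
      have hui := (mem_filter.1 hi).2
      simp only [h, if_pos hui, herase, insert_inter_of_mem hui, fiberLpNorm]
  have hne : (s.filter fun i => u ∈ N i).Nonempty := card_ne_zero.1 (hu ▸ hd)
  rw [← prod_filter_mul_prod_filter_not s (fun i => u ∈ N i) (fun i => g i (S ∩ N i)),
    ← prod_filter_mul_prod_filter_not s (fun i => u ∈ N i) (fun i => g i (insert u S ∩ N i)),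
    ← prod_filter_mul_prod_filter_not s (fun i => u ∈ N i) (fun i => h i (S ∩ (N i).erase u)),
    prod_congr rfl fun i hi => (hout i hi).1, prod_congr rfl fun i hi => (hout i hi).2, hin,
    ← add_mul, ← hu]
  gcongr
  exact prod_add_prod_le_prod_add_pow_card _ hne _ _

/-- Finner's inequality. By induction on `F`: summing out `u ∈ F` and applying Hölder's inequality
to the `d` factors whose `N i` contains `u` replaces them by their `fiberLpNorm`s. -/
theorem pow_sum_powerset_prod_le (s : Finset ι) (N : ι → Finset α) {d : ℕ} (hd : d ≠ 0)
    (F : Finset α) (hcover : ∀ a ∈ F, #{i ∈ s | a ∈ N i} = d) (g : ι → Finset α → ℝ≥0) :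
    (∑ S ∈ F.powerset, ∏ i ∈ s, g i (S ∩ N i)) ^ d ≤
      ∏ i ∈ s, ∑ T ∈ (N i).powerset, g i T ^ d := by
  induction F using Finset.induction_on generalizing N g with
  | empty =>
    rw [powerset_empty, sum_singleton, ← prod_pow]
    exact prod_le_prod' fun i _ => by
      simpa using single_le_sum (f := fun T => g i T ^ d) (fun _ _ => zero_le)
        (empty_mem_powerset (N i))
  | @insert u F hu ih =>
    set h : ι → Finset α → ℝ≥0 := fun i => if u ∈ N i then fiberLpNorm d u (g i) else g i
    have hcover' : ∀ a ∈ F, #{i ∈ s | a ∈ (N i).erase u} = d := fun a ha => by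
      simpa [mem_erase, ne_of_mem_of_not_mem ha hu] using hcover a (mem_insert_of_mem ha)
    calc (∑ S ∈ (insert u F).powerset, ∏ i ∈ s, g i (S ∩ N i)) ^ d
        = (∑ S ∈ F.powerset,
            (∏ i ∈ s, g i (S ∩ N i) + ∏ i ∈ s, g i (insert u S ∩ N i))) ^ d := by
          rw [sum_powerset_insert hu, sum_add_distrib]
      _ ≤ (∑ S ∈ F.powerset, ∏ i ∈ s, h i (S ∩ (N i).erase u)) ^ d := by
          gcongr with S hS
          exact prod_add_prod_insert_le s N g hd (hcover u (mem_insert_self u F))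
            fun huS => hu (mem_powerset.1 hS huS)
      _ ≤ ∏ i ∈ s, ∑ T ∈ ((N i).erase u).powerset, h i T ^ d := ih _ hcover' h
      _ = ∏ i ∈ s, ∑ T ∈ (N i).powerset, g i T ^ d := by
          refine prod_congr rfl fun i _ => ?_
          by_cases hui : u ∈ N i
          · simp only [h, if_pos hui, sum_powerset_erase_fiberLpNorm_pow hd hui]
          · simp only [h, if_neg hui, erase_eq_of_notMem hui]

end Finner

theorem Finset.sum_powerset_ite_empty_pow {α : Type*} [DecidableEq α] (N : Finset α) (d : ℕ) :
    ∑ T ∈ N.powerset, (if T = ∅ then 2 else 1) ^ d = 2 ^ d + (2 ^ #N - 1) := by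
  rw [← add_sum_erase _ _ (empty_mem_powerset N), if_pos rfl,
    sum_congr rfl fun T hT => by rw [if_neg (ne_of_mem_erase hT), one_pow], sum_const,
    card_erase_of_mem (empty_mem_powerset N), card_powerset, smul_eq_mul, mul_one]

namespace SimpleGraph

variable {V : Type*} [Fintype V] [DecidableEq V] (G : SimpleGraph V) [DecidableRel G.Adj]

theorem mem_indSets {s : Finset V} : s ∈ indSets G ↔ ∀ u ∈ s, ∀ v ∈ s, ¬G.Adj u v := by
  simp [indSets]

theorem card_indSets_fiber {A S : Finset V} (hA : A ∈ indSets G) (hAc : Aᶜ ∈ indSets G)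
    (hS : S ⊆ A) :
    #{I ∈ indSets G | I ∩ A = S} = 2 ^ #{v ∈ Aᶜ | S ∩ G.neighborFinset v = ∅} := by
  simp only [mem_indSets, mem_compl] at hA hAc
  rw [← card_powerset]
  refine card_nbij' (· \ A) (S ∪ ·) ?_ ?_ ?_ ?_
  · intro I hI
    simp only [coe_filter, Set.mem_ofPred_eq, mem_indSets] at hI
    simp only [coe_powerset, Set.mem_preimage, Set.mem_powerset_iff, coe_subset, subset_iff,
      mem_filter, mem_compl, eq_empty_iff_forall_notMem, mem_inter, mem_neighborFinset, ← hI.2]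
    grind
  · intro T hT
    simp only [coe_powerset, Set.mem_preimage, Set.mem_powerset_iff, coe_subset, subset_iff,
      mem_filter, mem_compl, eq_empty_iff_forall_notMem, mem_inter, mem_neighborFinset] at hT
    simp only [coe_filter, Set.mem_ofPred_eq, mem_indSets]
    grind [Adj.symm]
  · intro I hI
    simp only [coe_filter, Set.mem_ofPred_eq] at hI
    grind
  · intro T hT
    simp only [coe_powerset, Set.mem_preimage, Set.mem_powerset_iff, coe_subset, subset_iff,
      mem_filter, mem_compl] at hT
    grind

theorem card_indSets_eq_sum {A : Finset V} (hA : A ∈ indSets G) (hAc : Aᶜ ∈ indSets G) :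
    #(indSets G) = ∑ S ∈ A.powerset, 2 ^ #{v ∈ Aᶜ | S ∩ G.neighborFinset v = ∅} := by
  rw [card_eq_sum_card_fiberwise (f := (· ∩ A)) fun I _ => mem_powerset.2 inter_subset_right]
  exact sum_congr rfl fun S hS => card_indSets_fiber G hA hAc (mem_powerset.1 hS)

theorem card_indSets_pow_le {d : ℕ} (hd : d ≠ 0) (hreg : G.IsRegularOfDegree d) {A : Finset V}
    (hA : A ∈ indSets G) (hAc : Aᶜ ∈ indSets G) :
    #(indSets G) ^ d ≤ (2 ^ (d + 1) - 1) ^ #Aᶜ := by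
  have hcover : ∀ a ∈ A, #{v ∈ Aᶜ | a ∈ G.neighborFinset v} = d := fun a ha => by
    have hnbr : {v ∈ Aᶜ | a ∈ G.neighborFinset v} = G.neighborFinset a := by
      ext v
      simp only [mem_filter, mem_compl, mem_neighborFinset, adj_comm, and_iff_right_iff_imp]
      exact fun hav hv => (G.mem_indSets.1 hA) a ha v hv hav
    rw [hnbr, card_neighborFinset_eq_degree, hreg a]
  have hbox : ∀ v, ∑ T ∈ (G.neighborFinset v).powerset, (if T = ∅ then 2 else 1) ^ d =
      2 ^ (d + 1) - 1 := fun v => by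
    rw [sum_powerset_ite_empty_pow, card_neighborFinset_eq_degree, hreg v, pow_succ]
    have := Nat.one_le_two_pow (n := d)
    omega
  have key := pow_sum_powerset_prod_le Aᶜ (G.neighborFinset ·) hd A hcover
    fun _ T => ((if T = ∅ then 2 else 1 : ℕ) : ℝ≥0)
  simp only [← Nat.cast_prod, ← Nat.cast_sum, ← Nat.cast_pow, Nat.cast_le] at key
  simpa only [card_indSets_eq_sum G hA hAc, prod_ite, prod_const, one_pow, mul_one, hbox]
    using key

end SimpleGraph

theorem Real.le_rpow_div_of_pow_le {x y : ℝ} (hx : 0 ≤ x) (hy : 0 ≤ y) {k n : ℕ} (hk : k ≠ 0)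
    (h : x ^ k ≤ y ^ n) : x ≤ y ^ ((n : ℝ) / k) := calc
  x = (x ^ k) ^ ((k : ℝ)⁻¹) := (pow_rpow_inv_natCast hx hk).symm
  _ ≤ (y ^ n) ^ ((k : ℝ)⁻¹) := rpow_le_rpow (by positivity) h (by positivity)
  _ = y ^ ((n : ℝ) / k) := by rw [← rpow_natCast, ← rpow_mul hy, div_eq_mul_inv]

/-- **Kahn's theorem.** If `G` is a bipartite `d`-regular simple graph (`d ≥ 1`) with `n`
vertices, then the number of its independent sets is at most `(2^(d+1) - 1)^(n/(2d))`. -/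
theorem kahn_independent_sets {V : Type*} [Fintype V] [DecidableEq V]
    (G : SimpleGraph V) [DecidableRel G.Adj] (d : ℕ) (hd : 1 ≤ d)
    (hbip : G.Colorable 2) (hreg : G.IsRegularOfDegree d) :
    ((indSets G).card : ℝ) ≤
      ((2 : ℝ) ^ (d + 1) - 1) ^ ((Fintype.card V : ℝ) / (2 * d)) := by
  obtain ⟨C⟩ := hbip
  set A : Finset V := {v | C v = 0}
  have hA : A ∈ indSets G := G.mem_indSets.2 fun u hu v hv huv =>
    C.valid huv (by simp_all [A])
  have hAc : Aᶜ ∈ indSets G := G.mem_indSets.2 fun u hu v hv huv =>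
    C.valid huv (by simp only [A, mem_compl, mem_filter, mem_univ, true_and] at hu hv; omega)
  have hd0 : d ≠ 0 := by omega
  have hpow : #(indSets G) ^ (2 * d) ≤ (2 ^ (d + 1) - 1) ^ Fintype.card V := calc
    #(indSets G) ^ (2 * d) = #(indSets G) ^ d * #(indSets G) ^ d := by rw [two_mul, pow_add]
    _ ≤ (2 ^ (d + 1) - 1) ^ #Aᶜ * (2 ^ (d + 1) - 1) ^ #Aᶜᶜ :=
      Nat.mul_le_mul (G.card_indSets_pow_le hd0 hreg hA hAc)
        (G.card_indSets_pow_le hd0 hreg hAc (by rwa [compl_compl]))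
    _ = (2 ^ (d + 1) - 1) ^ Fintype.card V := by rw [← pow_add, compl_compl, card_compl_add_card]
  have hM : ((2 ^ (d + 1) - 1 : ℕ) : ℝ) = (2 : ℝ) ^ (d + 1) - 1 := by
    rw [Nat.cast_sub Nat.one_le_two_pow]; push_cast; ring
  have := Real.le_rpow_div_of_pow_le (Nat.cast_nonneg _) (Nat.cast_nonneg _)
    (by positivity : 2 * d ≠ 0) (by exact_mod_cast hpow)
  rwa [hM, Nat.cast_mul, Nat.cast_two] at this
end

section
/- Zhao's inequality: For every finite undirected simple graph G, the number of independent sets satisfies |I(G)|^2 ≤ |I(G × K_2)|, where G × K_2 is the bipartite double cover of G. -/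
/-- The bipartite double cover `G × K₂` of a graph `G`: its vertices are pairs `(v, i)`
with `v ∈ V(G)` and `i ∈ {0,1}`, and `(u, i)` is adjacent to `(v, j)` iff
`(u,v) ∈ E(G)` and `i ≠ j`. -/
def doubleCover {V : Type*} (G : SimpleGraph V) : SimpleGraph (V × Bool) where
  Adj x y := G.Adj x.1 y.1 ∧ x.2 ≠ y.2
  symm := ⟨fun x y h => ⟨h.1.symm, h.2.symm⟩⟩
  loopless := ⟨fun x h => h.2 rfl⟩

instance {V : Type*} (G : SimpleGraph V) [DecidableRel G.Adj] :
    DecidableRel (doubleCover G).Adj :=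
  fun x y => inferInstanceAs (Decidable (G.Adj x.1 y.1 ∧ x.2 ≠ y.2))

open Finset
open scoped symmDiff

section DoubleCover

variable {V : Type*} [DecidableEq V]

def coverSet (S T : Finset V) : Finset (V × Bool) := S ×ˢ {false} ∪ T ×ˢ {true}

@[simp]
theorem mem_coverSet_false {S T : Finset V} {v : V} : (v, false) ∈ coverSet S T ↔ v ∈ S := by
  simp [coverSet]

@[simp]
theorem mem_coverSet_true {S T : Finset V} {v : V} : (v, true) ∈ coverSet S T ↔ v ∈ T := by
  simp [coverSet]

theorem coverSet_injective : Function.Injective2 (coverSet (V := V)) := by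
  intro S S' T T' h
  constructor <;> ext v
  · rw [← mem_coverSet_false (T := T), h, mem_coverSet_false]
  · rw [← mem_coverSet_true (S := S), h, mem_coverSet_true]

variable [Fintype V] {G : SimpleGraph V} [DecidableRel G.Adj]

theorem mem_indSets {s : Finset V} : s ∈ indSets G ↔ G.IsIndepSet s := by
  simp only [indSets, mem_filter, mem_univ, true_and]
  exact ⟨fun h u hu v hv _ => h u hu v hv, fun h u hu v hv hadj => h hu hv hadj.ne hadj⟩

theorem coverSet_mem_indSets {S T : Finset V} (h : ∀ u ∈ S, ∀ v ∈ T, ¬G.Adj u v) :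
    coverSet S T ∈ indSets (doubleCover G) := by
  simp only [indSets, mem_filter, mem_univ, true_and]
  rintro ⟨u, (_ | _)⟩ hu ⟨v, (_ | _)⟩ hv ⟨hadj, hne⟩ <;>
    simp only [mem_coverSet_false, mem_coverSet_true] at hu hv
  · exact hne rfl
  · exact h u hu v hv hadj
  · exact h v hv u hu hadj.symm
  · exact hne rfl

end DoubleCover

namespace SimpleGraph

variable {V : Type*} {G : SimpleGraph V}

theorem Reachable.apply_eq_of_adj {α : Sort*} {f : V → α}
    (hf : ∀ ⦃u v⦄, G.Adj u v → f u = f v) {u w : V} (h : G.Reachable u w) : f u = f w := by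
  obtain ⟨p⟩ := h
  induction p with
  | nil => rfl
  | cons hadj _ ih => exact (hf hadj).trans ih

theorem IsIndepSet.not_adj {s : Set V} (hs : G.IsIndepSet s) {u v : V} (hu : u ∈ s)
    (hv : v ∈ s) : ¬G.Adj u v :=
  fun h => hs hu hv h.ne h

variable (G)

noncomputable def componentRep (v : V) : V := (G.connectedComponentMk v).out

theorem reachable_componentRep (v : V) : G.Reachable v (G.componentRep v) :=
  ConnectedComponent.exact (Quot.out_eq _).symm

theorem componentRep_eq_of_adj {u v : V} (h : G.Adj u v) :
    G.componentRep u = G.componentRep v := by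
  rw [componentRep, componentRep, ConnectedComponent.connectedComponentMk_eq_of_adj h]

def spanningInduce (s : Set V) : SimpleGraph V := ((⊤ : G.Subgraph).induce s).spanningCoe

variable {G}

@[simp]
theorem spanningInduce_adj {s : Set V} {u v : V} :
    (G.spanningInduce s).Adj u v ↔ u ∈ s ∧ v ∈ s ∧ G.Adj u v := by
  simp [spanningInduce]

theorem mem_of_reachable_spanningInduce {s : Set V} {u w : V}
    (h : (G.spanningInduce s).Reachable u w) (hu : u ∈ s) : w ∈ s :=
  (h.apply_eq_of_adj (f := (· ∈ s)) fun _ _ hadj =>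
    have ⟨hx, hy, _⟩ := spanningInduce_adj.mp hadj
    eq_iff_iff.mpr (iff_of_true hx hy)) ▸ hu

theorem componentRep_spanningInduce_mem {s : Set V} {v : V} (hv : v ∈ s) :
    (G.spanningInduce s).componentRep v ∈ s :=
  mem_of_reachable_spanningInduce (reachable_componentRep _ v) hv

variable [DecidableEq V] {A B A' B' D : Finset V} {u v : V}

theorem mem_symmDiff_of_adj (hA : G.IsIndepSet A) (hB : G.IsIndepSet B) (hu : u ∈ A ∪ B)
    (hv : v ∈ A ∪ B) (h : G.Adj u v) : u ∈ A ∆ B := by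
  rw [mem_union] at hu hv
  rw [mem_symmDiff]
  by_contra! hAB
  rcases hv with hvA | hvB
  · exact hA.not_adj (by tauto) hvA h
  · exact hB.not_adj (by tauto) hvB h

theorem mem_iff_notMem_of_adj_spanningInduce (hA : G.IsIndepSet A) (hB : G.IsIndepSet B)
    (h : (G.spanningInduce ↑(A ∆ B)).Adj u v) : u ∈ A ↔ v ∉ A := by
  obtain ⟨hu, hv, hadj⟩ := spanningInduce_adj.mp h
  rw [mem_coe, mem_symmDiff] at hu hv
  constructor
  · exact fun huA hvA => hA.not_adj huA hvA hadj
  · intro hvA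
    by_contra huA
    exact hB.not_adj (by tauto) (by tauto) hadj

theorem mem_iff_mem_iff_of_reachable (hA : G.IsIndepSet A) (hB : G.IsIndepSet B)
    (hA' : G.IsIndepSet A') (hB' : G.IsIndepSet B') (hD : A ∆ B = A' ∆ B') {w : V}
    (h : (G.spanningInduce ↑(A ∆ B)).Reachable u w) :
    (u ∈ A ↔ u ∈ A') ↔ (w ∈ A ↔ w ∈ A') := by
  refine eq_iff_iff.mp (h.apply_eq_of_adj (f := fun x => (x ∈ A ↔ x ∈ A'))
    fun x y hxy => eq_iff_iff.mpr ?_)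
  rw [mem_iff_notMem_of_adj_spanningInduce hA hB hxy,
    mem_iff_notMem_of_adj_spanningInduce hA' hB' (hD ▸ hxy), not_iff_not]

variable (G) in
noncomputable def fillComponents (D A : Finset V) : Finset V :=
  A \ D ∪ D.filter fun v => (G.spanningInduce D).componentRep v ∈ A

theorem mem_fillComponents_of_mem (hv : v ∈ D) :
    v ∈ G.fillComponents D A ↔ (G.spanningInduce D).componentRep v ∈ A := by
  simp [fillComponents, hv]

theorem mem_fillComponents_of_notMem (hv : v ∉ D) : v ∈ G.fillComponents D A ↔ v ∈ A := by
  simp [fillComponents, hv]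

theorem fillComponents_symmDiff_subset : G.fillComponents (A ∆ B) A ⊆ A ∪ B := by
  intro v hv
  by_cases hD : v ∈ A ∆ B
  · exact symmDiff_le_sup (α := Finset V) hD
  · exact mem_union_left _ ((mem_fillComponents_of_notMem hD).mp hv)

theorem symmDiff_fillComponents (A B : Finset V) :
    G.fillComponents (A ∆ B) A ∆ G.fillComponents (A ∆ B) B = A ∆ B := by
  ext v
  by_cases hv : v ∈ A ∆ B
  · have hrep := componentRep_spanningInduce_mem (G := G) (mem_coe.mpr hv)
    rw [mem_symmDiff, mem_fillComponents_of_mem hv, mem_fillComponents_of_mem hv]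
    exact iff_of_true (mem_symmDiff.mp hrep) hv
  · rw [mem_symmDiff, mem_fillComponents_of_notMem hv, mem_fillComponents_of_notMem hv,
      ← mem_symmDiff]

theorem not_adj_fillComponents (hA : G.IsIndepSet A) (hB : G.IsIndepSet B)
    (hu : u ∈ G.fillComponents (A ∆ B) A) (hv : v ∈ G.fillComponents (A ∆ B) B) :
    ¬G.Adj u v := by
  intro hadj
  have huAB := fillComponents_symmDiff_subset hu
  have hvAB : v ∈ A ∪ B := by
    rw [symmDiff_comm] at hv
    rw [union_comm]
    exact fillComponents_symmDiff_subset hv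
  have huD := mem_symmDiff_of_adj hA hB huAB hvAB hadj
  have hvD := mem_symmDiff_of_adj hA hB hvAB huAB hadj.symm
  have hrep := componentRep_spanningInduce_mem (G := G) (mem_coe.mpr huD)
  rw [mem_fillComponents_of_mem huD] at hu
  rw [mem_fillComponents_of_mem hvD,
    ← componentRep_eq_of_adj _ (spanningInduce_adj.mpr ⟨huD, hvD, hadj⟩)] at hv
  rw [mem_coe, mem_symmDiff] at hrep
  tauto

theorem eq_of_fillComponents_eq (hA : G.IsIndepSet A) (hB : G.IsIndepSet B)
    (hA' : G.IsIndepSet A') (hB' : G.IsIndepSet B')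
    (hAA' : G.fillComponents (A ∆ B) A = G.fillComponents (A' ∆ B') A')
    (hBB' : G.fillComponents (A ∆ B) B = G.fillComponents (A' ∆ B') B') :
    A = A' ∧ B = B' := by
  have hD : A ∆ B = A' ∆ B' := by
    rw [← symmDiff_fillComponents, hAA', hBB', symmDiff_fillComponents]
  have hA_eq : A = A' := by
    ext v
    by_cases hv : v ∈ A ∆ B
    · have hrep : (G.spanningInduce ↑(A ∆ B)).componentRep v ∈ A ↔
          (G.spanningInduce ↑(A ∆ B)).componentRep v ∈ A' := by
        rw [← mem_fillComponents_of_mem hv, hAA', hD, mem_fillComponents_of_mem (hD ▸ hv)]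
      exact (mem_iff_mem_iff_of_reachable hA hB hA' hB' hD (reachable_componentRep _ v)).mpr hrep
    · rw [← mem_fillComponents_of_notMem hv, hAA', mem_fillComponents_of_notMem (hD ▸ hv)]
  refine ⟨hA_eq, ?_⟩
  rw [← symmDiff_symmDiff_cancel_left A B, hD, hA_eq, symmDiff_symmDiff_cancel_left]

variable (G) in
noncomputable def pairToDoubleCover (A B : Finset V) : Finset (V × Bool) :=
  coverSet (G.fillComponents (A ∆ B) A) (G.fillComponents (A ∆ B) B)

theorem pairToDoubleCover_mem_indSets [Fintype V] [DecidableRel G.Adj] (hA : G.IsIndepSet A)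
    (hB : G.IsIndepSet B) : G.pairToDoubleCover A B ∈ indSets (doubleCover G) :=
  coverSet_mem_indSets fun _ hu _ hv => not_adj_fillComponents hA hB hu hv

theorem eq_of_pairToDoubleCover_eq (hA : G.IsIndepSet A) (hB : G.IsIndepSet B)
    (hA' : G.IsIndepSet A') (hB' : G.IsIndepSet B')
    (h : G.pairToDoubleCover A B = G.pairToDoubleCover A' B') : A = A' ∧ B = B' :=
  eq_of_fillComponents_eq hA hB hA' hB' (coverSet_injective h).1 (coverSet_injective h).2

end SimpleGraph

/-- **Zhao's inequality.** For every finite simple graph `G`, the number of independent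
sets satisfies `|I(G)|² ≤ |I(G × K₂)|`, where `G × K₂` is the bipartite double cover. -/
theorem zhao_inequality {V : Type*} [Fintype V] [DecidableEq V]
    (G : SimpleGraph V) [DecidableRel G.Adj] :
    (indSets G).card ^ 2 ≤ (indSets (doubleCover G)).card := by
  calc (indSets G).card ^ 2 = (indSets G ×ˢ indSets G).card := by rw [card_product, sq]
    _ ≤ (indSets (doubleCover G)).card := by
      refine card_le_card_of_injOn (fun p => G.pairToDoubleCover p.1 p.2) ?_ ?_
      · rintro ⟨A, B⟩ hAB
        simp only [coe_product, Set.mem_prod, mem_coe, mem_indSets] at hAB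
        exact G.pairToDoubleCover_mem_indSets hAB.1 hAB.2
      · rintro ⟨A, B⟩ hAB ⟨A', B'⟩ hAB' h
        simp only [coe_product, Set.mem_prod, mem_coe, mem_indSets] at hAB hAB'
        obtain ⟨rfl, rfl⟩ := G.eq_of_pairToDoubleCover_eq hAB.1 hAB.2 hAB'.1 hAB'.2 h
        rfl
end

section
/- Theorem (Kaced, Romashchenko, Vereshchagin): Let A, X, Y be discrete random variables taking values in finite or countable sets 𝒜, 𝒳, 𝒴, with joint probability mass function P_{A,X,Y}. If for every pair (x, y) ∈ 𝒳 × 𝒴 there exists at most one element a ∈ 𝒜 such that P_{A,X}(a,x) · P_{A,Y}(a,y) > 0, then H(A | X) + H(A | Y) ≤ H(A). -/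
/-- The conditional Shannon entropy `H(A | X) = H(A, X) - H(X)`. -/
noncomputable def condEntropy {Ω α β : Type*} [Fintype Ω] [DecidableEq α] [DecidableEq β]
    (μ : Ω → ℝ) (A : Ω → α) (X : Ω → β) : ℝ :=
  entropy μ (fun ω => (A ω, X ω)) - entropy μ X

/-- The joint probability mass function of the pair `(A, X)`:
`P_{A,X}(a, x) = μ {ω | A ω = a ∧ X ω = x}`. -/
noncomputable def jointPMF {Ω α β : Type*} [Fintype Ω] [DecidableEq α] [DecidableEq β]
    (μ : Ω → ℝ) (A : Ω → α) (X : Ω → β) (a : α) (x : β) : ℝ :=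
  ∑ ω ∈ Finset.univ.filter (fun ω => A ω = a ∧ X ω = x), μ ω

private lemma log_ineq {p r : ℝ} (hp : 0 ≤ p) (hr : 0 ≤ r) (hpr : 0 < p → 0 < r) :
    p * Real.log r - p * Real.log p ≤ r - p := by
  rcases hp.eq_or_lt with h | h
  · simp [← h, hr]
  · have hr' : 0 < r := hpr h
    have key : Real.log (r / p) ≤ r / p - 1 := Real.log_le_sub_one_of_pos (div_pos hr' h)
    rw [Real.log_div hr'.ne' h.ne'] at key
    calc p * Real.log r - p * Real.log p = p * (Real.log r - Real.log p) := by ring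
      _ ≤ p * (r / p - 1) := mul_le_mul_of_nonneg_left key h.le
      _ = r - p := by field_simp

private lemma marg {Ω β : Type*} [Fintype Ω] [DecidableEq β] (μ : Ω → ℝ) (Z : Ω → β)
    (s : Finset Ω) :
    ∑ b ∈ Finset.univ.image Z, ∑ ω ∈ s.filter (fun ω => Z ω = b), μ ω = ∑ ω ∈ s, μ ω :=
  Finset.sum_fiberwise_of_maps_to (fun ω _ => Finset.mem_image_of_mem Z (Finset.mem_univ ω)) μ

private lemma entropy_eq_sum_subset {Ω β : Type*} [Fintype Ω] [DecidableEq β]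
    (μ : Ω → ℝ) (Z : Ω → β) (S : Finset β) (hS : Finset.univ.image Z ⊆ S) :
    entropy μ Z
      = -∑ b ∈ S, ((∑ ω ∈ Finset.univ.filter (fun ω => Z ω = b), μ ω) *
          Real.log (∑ ω ∈ Finset.univ.filter (fun ω => Z ω = b), μ ω)) := by
  unfold entropy
  congr 1
  apply Finset.sum_subset hS
  intro b _ hb
  have he : Finset.univ.filter (fun ω => Z ω = b) = ∅ := by
    rw [Finset.filter_eq_empty_iff]
    intro ω _ hω
    exact hb (by rw [← hω]; exact Finset.mem_image_of_mem Z (Finset.mem_univ ω))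
  simp [he]

/-- **Theorem (Kaced–Romashchenko–Vereshchagin).** If for every pair `(x, y)` there is at
most one `a` with `P_{A,X}(a,x) · P_{A,Y}(a,y) > 0`, then `H(A|X) + H(A|Y) ≤ H(A)`. -/
theorem kaced_romashchenko_vereshchagin {Ω 𝒜 𝒳 𝒴 : Type*} [Fintype Ω]
    [DecidableEq 𝒜] [DecidableEq 𝒳] [DecidableEq 𝒴]
    (μ : Ω → ℝ) (hμ0 : ∀ ω, 0 ≤ μ ω) (hμ1 : ∑ ω, μ ω = 1)
    (A : Ω → 𝒜) (X : Ω → 𝒳) (Y : Ω → 𝒴)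
    (h : ∀ (x : 𝒳) (y : 𝒴) (a a' : 𝒜),
      0 < jointPMF μ A X a x * jointPMF μ A Y a y →
      0 < jointPMF μ A X a' x * jointPMF μ A Y a' y → a = a') :
    condEntropy μ A X + condEntropy μ A Y ≤ entropy μ A := by
  classical
  set SA := Finset.univ.image A with hSA
  set SX := Finset.univ.image X with hSX
  set SY := Finset.univ.image Y with hSY
  set pA : 𝒜 → ℝ := fun a => ∑ ω ∈ Finset.univ.filter (fun ω => A ω = a), μ ω with hpA
  set pX : 𝒳 → ℝ := fun x => ∑ ω ∈ Finset.univ.filter (fun ω => X ω = x), μ ω with hpX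
  set pY : 𝒴 → ℝ := fun y => ∑ ω ∈ Finset.univ.filter (fun ω => Y ω = y), μ ω with hpY
  set pAX : 𝒜 → 𝒳 → ℝ := fun a x => jointPMF μ A X a x with hpAX
  set pAY : 𝒜 → 𝒴 → ℝ := fun a y => jointPMF μ A Y a y with hpAY
  -- nonnegativity
  have hpA0 : ∀ a, 0 ≤ pA a := fun a => Finset.sum_nonneg fun ω _ => hμ0 ω
  have hpX0 : ∀ x, 0 ≤ pX x := fun x => Finset.sum_nonneg fun ω _ => hμ0 ω
  have hpY0 : ∀ y, 0 ≤ pY y := fun y => Finset.sum_nonneg fun ω _ => hμ0 ω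
  have hpAX0 : ∀ a x, 0 ≤ pAX a x := fun a x => Finset.sum_nonneg fun ω _ => hμ0 ω
  have hpAY0 : ∀ a y, 0 ≤ pAY a y := fun a y => Finset.sum_nonneg fun ω _ => hμ0 ω
  -- marginals
  have hAX_A : ∀ a, ∑ x ∈ SX, pAX a x = pA a := by
    intro a
    have e : ∀ x, pAX a x
        = ∑ ω ∈ (Finset.univ.filter (fun ω => A ω = a)).filter (fun ω => X ω = x), μ ω := by
      intro x; rw [Finset.filter_filter]; rfl
    rw [Finset.sum_congr rfl fun x _ => e x]
    exact marg μ X _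
  have hAY_A : ∀ a, ∑ y ∈ SY, pAY a y = pA a := by
    intro a
    have e : ∀ y, pAY a y
        = ∑ ω ∈ (Finset.univ.filter (fun ω => A ω = a)).filter (fun ω => Y ω = y), μ ω := by
      intro y; rw [Finset.filter_filter]; rfl
    rw [Finset.sum_congr rfl fun y _ => e y]
    exact marg μ Y _
  have hAX_X : ∀ x, ∑ a ∈ SA, pAX a x = pX x := by
    intro x
    have e : ∀ a, pAX a x
        = ∑ ω ∈ (Finset.univ.filter (fun ω => X ω = x)).filter (fun ω => A ω = a), μ ω := by
      intro a; rw [Finset.filter_filter]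
      simp only [hpAX, jointPMF]
      congr 1
      apply Finset.filter_congr
      intro ω _; exact and_comm
    rw [Finset.sum_congr rfl fun a _ => e a]
    exact marg μ A _
  have hAY_Y : ∀ y, ∑ a ∈ SA, pAY a y = pY y := by
    intro y
    have e : ∀ a, pAY a y
        = ∑ ω ∈ (Finset.univ.filter (fun ω => Y ω = y)).filter (fun ω => A ω = a), μ ω := by
      intro a; rw [Finset.filter_filter]
      simp only [hpAY, jointPMF]
      congr 1
      apply Finset.filter_congr
      intro ω _; exact and_comm
    rw [Finset.sum_congr rfl fun a _ => e a]
    exact marg μ A _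
  have hX1 : ∑ x ∈ SX, pX x = 1 := by rw [← hμ1]; exact marg μ X Finset.univ
  have hY1 : ∑ y ∈ SY, pY y = 1 := by rw [← hμ1]; exact marg μ Y Finset.univ
  -- pAX a x ≤ pA a
  have hle_X : ∀ a x, pAX a x ≤ pA a := by
    intro a x
    apply Finset.sum_le_sum_of_subset_of_nonneg
    · intro ω hω
      simp only [Finset.mem_filter, Finset.mem_univ, true_and] at hω ⊢
      exact hω.1
    · intro ω _ _; exact hμ0 ω
  have hle_Y : ∀ a y, pAY a y ≤ pA a := by
    intro a y
    apply Finset.sum_le_sum_of_subset_of_nonneg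
    · intro ω hω
      simp only [Finset.mem_filter, Finset.mem_univ, true_and] at hω ⊢
      exact hω.1
    · intro ω _ _; exact hμ0 ω
  -- the coupled distribution Q
  set Q : 𝒜 → 𝒳 → 𝒴 → ℝ := fun a x y => pAX a x * pAY a y / pA a with hQdef
  set q : 𝒳 → 𝒴 → ℝ := fun x y => ∑ a ∈ SA, Q a x y with hqdef
  have hQ0 : ∀ a x y, 0 ≤ Q a x y := fun a x y =>
    div_nonneg (mul_nonneg (hpAX0 a x) (hpAY0 a y)) (hpA0 a)
  have hq0 : ∀ x y, 0 ≤ q x y := fun x y => Finset.sum_nonneg fun a _ => hQ0 a x y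
  have hQpos : ∀ a x y, 0 < Q a x y ↔ 0 < pAX a x * pAY a y := by
    intro a x y
    constructor
    · intro hQ
      rcases (mul_nonneg (hpAX0 a x) (hpAY0 a y)).eq_or_lt with hh | hh
      · exfalso
        have : Q a x y = 0 := by simp only [hQdef]; rw [← hh, zero_div]
        rw [this] at hQ; exact lt_irrefl 0 hQ
      · exact hh
    · intro hprod
      have hx : 0 < pAX a x := by nlinarith [hpAY0 a y, hpAX0 a x]
      have hA : 0 < pA a := lt_of_lt_of_le hx (hle_X a x)
      simp only [hQdef]
      exact div_pos hprod hA
  have hQsumY : ∀ a x, ∑ y ∈ SY, Q a x y = pAX a x := by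
    intro a x
    by_cases hA : pA a = 0
    · have hz : pAX a x = 0 :=
        le_antisymm (hA ▸ hle_X a x) (hpAX0 a x)
      simp [hQdef, hz]
    · simp only [hQdef]
      rw [← Finset.sum_div, ← Finset.mul_sum, hAY_A]
      field_simp
  have hQsumX : ∀ a y, ∑ x ∈ SX, Q a x y = pAY a y := by
    intro a y
    by_cases hA : pA a = 0
    · have hz : pAY a y = 0 := le_antisymm (hA ▸ hle_Y a y) (hpAY0 a y)
      simp [hQdef, hz]
    · simp only [hQdef]
      have e : ∀ x, pAX a x * pAY a y / pA a = pAY a y * pAX a x / pA a := by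
        intro x; ring
      rw [Finset.sum_congr rfl fun x _ => e x, ← Finset.sum_div, ← Finset.mul_sum, hAX_A]
      field_simp
  have hQsumXY : ∀ a, ∑ x ∈ SX, ∑ y ∈ SY, Q a x y = pA a := by
    intro a
    rw [Finset.sum_congr rfl fun x _ => hQsumY a x]
    exact hAX_A a
  -- pointwise logarithm expansion
  have hQlog : ∀ a x y, Q a x y * Real.log (Q a x y)
      = Q a x y * Real.log (pAX a x) + Q a x y * Real.log (pAY a y)
        - Q a x y * Real.log (pA a) := by
    intro a x y
    rcases (hQ0 a x y).eq_or_lt with hz | hz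
    · rw [← hz]; ring
    · have hprod := (hQpos a x y).1 hz
      have hx : 0 < pAX a x := by nlinarith [hpAY0 a y, hpAX0 a x]
      have hy : 0 < pAY a y := by nlinarith [hpAY0 a y, hpAX0 a x]
      have hA : 0 < pA a := lt_of_lt_of_le hx (hle_X a x)
      have hlog : Real.log (Q a x y)
          = Real.log (pAX a x) + Real.log (pAY a y) - Real.log (pA a) := by
        simp only [hQdef]
        rw [Real.log_div (by positivity) hA.ne', Real.log_mul hx.ne' hy.ne']
      rw [hlog]; ring
  -- collapse over a using uniqueness
  have hcollapse : ∀ x y, ∑ a ∈ SA, Q a x y * Real.log (Q a x y)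
      = q x y * Real.log (q x y) := by
    intro x y
    by_cases hex : ∃ a₀ ∈ SA, 0 < Q a₀ x y
    · obtain ⟨a₀, ha₀S, ha₀⟩ := hex
      have huniq : ∀ a ∈ SA, a ≠ a₀ → Q a x y = 0 := by
        intro a _ hne
        rcases (hQ0 a x y).eq_or_lt with hz | hz
        · exact hz.symm
        · exact absurd (h x y a a₀ ((hQpos a x y).1 hz) ((hQpos a₀ x y).1 ha₀)) hne
      have hq_eq : q x y = Q a₀ x y := by
        simp only [hqdef]
        exact Finset.sum_eq_single_of_mem a₀ ha₀S huniq
      rw [hq_eq]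
      refine Finset.sum_eq_single_of_mem a₀ ha₀S fun a ha hne => ?_
      rw [huniq a ha hne]; ring
    · push_neg at hex
      have hz : ∀ a ∈ SA, Q a x y = 0 := fun a ha => le_antisymm (hex a ha) (hQ0 a x y)
      have hq_eq : q x y = 0 := by
        simp only [hqdef]
        exact Finset.sum_eq_zero hz
      rw [hq_eq]
      rw [Finset.sum_eq_zero fun a ha => by rw [hz a ha]; ring]
      simp
  -- the main identity
  have keyA : ∑ x ∈ SX, ∑ y ∈ SY, q x y * Real.log (q x y)
      = (∑ a ∈ SA, ∑ x ∈ SX, pAX a x * Real.log (pAX a x))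
        + (∑ a ∈ SA, ∑ y ∈ SY, pAY a y * Real.log (pAY a y))
        - ∑ a ∈ SA, pA a * Real.log (pA a) := by
    calc ∑ x ∈ SX, ∑ y ∈ SY, q x y * Real.log (q x y)
        = ∑ x ∈ SX, ∑ y ∈ SY, ∑ a ∈ SA, Q a x y * Real.log (Q a x y) := by
          refine Finset.sum_congr rfl fun x _ => Finset.sum_congr rfl fun y _ => ?_
          exact (hcollapse x y).symm
      _ = ∑ x ∈ SX, ∑ a ∈ SA, ∑ y ∈ SY, Q a x y * Real.log (Q a x y) :=
          Finset.sum_congr rfl fun x _ => Finset.sum_comm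
      _ = ∑ a ∈ SA, ∑ x ∈ SX, ∑ y ∈ SY, Q a x y * Real.log (Q a x y) := Finset.sum_comm
      _ = ∑ a ∈ SA, ∑ x ∈ SX, ∑ y ∈ SY,
            (Q a x y * Real.log (pAX a x) + Q a x y * Real.log (pAY a y)
              - Q a x y * Real.log (pA a)) := by
          refine Finset.sum_congr rfl fun a _ => Finset.sum_congr rfl fun x _ =>
            Finset.sum_congr rfl fun y _ => hQlog a x y
      _ = (∑ a ∈ SA, ∑ x ∈ SX, pAX a x * Real.log (pAX a x))
            + (∑ a ∈ SA, ∑ y ∈ SY, pAY a y * Real.log (pAY a y))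
            - ∑ a ∈ SA, pA a * Real.log (pA a) := by
          simp only [Finset.sum_sub_distrib, Finset.sum_add_distrib]
          congr 1
          · congr 1
            · -- T1
              refine Finset.sum_congr rfl fun a _ => Finset.sum_congr rfl fun x _ => ?_
              rw [← Finset.sum_mul, hQsumY a x]
            · -- T2
              refine Finset.sum_congr rfl fun a _ => ?_
              rw [Finset.sum_comm]
              refine Finset.sum_congr rfl fun y _ => ?_
              rw [← Finset.sum_mul, hQsumX a y]
          · -- T3
            refine Finset.sum_congr rfl fun a _ => ?_
            have : ∑ x ∈ SX, ∑ y ∈ SY, Q a x y * Real.log (pA a)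
                = (∑ x ∈ SX, ∑ y ∈ SY, Q a x y) * Real.log (pA a) := by
              rw [Finset.sum_mul]
              refine Finset.sum_congr rfl fun x _ => ?_
              rw [Finset.sum_mul]
            rw [this, hQsumXY a]
  -- marginals of q
  have hqY : ∀ x, ∑ y ∈ SY, q x y = pX x := by
    intro x
    simp only [hqdef]
    rw [Finset.sum_comm]
    rw [Finset.sum_congr rfl fun a _ => hQsumY a x]
    exact hAX_X x
  have hqX : ∀ y, ∑ x ∈ SX, q x y = pY y := by
    intro y
    simp only [hqdef]
    rw [Finset.sum_comm]
    rw [Finset.sum_congr rfl fun a _ => hQsumX a y]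
    exact hAY_Y y
  have hq_le_pX : ∀ x, ∀ y ∈ SY, q x y ≤ pX x := by
    intro x y hy
    rw [← hqY x]
    exact Finset.single_le_sum (fun y' _ => hq0 x y') hy
  have hq_le_pY : ∀ y, ∀ x ∈ SX, q x y ≤ pY y := by
    intro y x hx
    rw [← hqX y]
    exact Finset.single_le_sum (fun x' _ => hq0 x' y) hx
  -- subadditivity
  have hsub : ∑ x ∈ SX, pX x * Real.log (pX x) + ∑ y ∈ SY, pY y * Real.log (pY y)
      ≤ ∑ x ∈ SX, ∑ y ∈ SY, q x y * Real.log (q x y) := by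
    have hpt : ∀ x ∈ SX, ∀ y ∈ SY,
        q x y * Real.log (pX x) + q x y * Real.log (pY y) - q x y * Real.log (q x y)
          ≤ pX x * pY y - q x y := by
      intro x hx y hy
      rcases (hq0 x y).eq_or_lt with hz | hz
      · rw [← hz]
        have := mul_nonneg (hpX0 x) (hpY0 y)
        simp only [zero_mul, add_zero, sub_zero, zero_add, sub_self]
        linarith
      · have hx' : 0 < pX x := lt_of_lt_of_le hz (hq_le_pX x y hy)
        have hy' : 0 < pY y := lt_of_lt_of_le hz (hq_le_pY y x hx)
        have key := log_ineq (hq0 x y) (le_of_lt (mul_pos hx' hy'))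
          (fun _ => mul_pos hx' hy')
        rw [Real.log_mul hx'.ne' hy'.ne'] at key
        have e : q x y * (Real.log (pX x) + Real.log (pY y))
            = q x y * Real.log (pX x) + q x y * Real.log (pY y) := by ring
        linarith [key, e]
    have hsum : ∑ x ∈ SX, ∑ y ∈ SY,
        (q x y * Real.log (pX x) + q x y * Real.log (pY y) - q x y * Real.log (q x y))
        ≤ ∑ x ∈ SX, ∑ y ∈ SY, (pX x * pY y - q x y) := by
      refine Finset.sum_le_sum fun x hx => Finset.sum_le_sum fun y hy => hpt x hx y hy
    -- compute both sides
    have lhs_eq : ∑ x ∈ SX, ∑ y ∈ SY,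
        (q x y * Real.log (pX x) + q x y * Real.log (pY y) - q x y * Real.log (q x y))
        = ∑ x ∈ SX, pX x * Real.log (pX x) + ∑ y ∈ SY, pY y * Real.log (pY y)
          - ∑ x ∈ SX, ∑ y ∈ SY, q x y * Real.log (q x y) := by
      simp only [Finset.sum_sub_distrib, Finset.sum_add_distrib]
      congr 2
      · refine Finset.sum_congr rfl fun x _ => ?_
        rw [← Finset.sum_mul, hqY x]
      · rw [Finset.sum_comm]
        refine Finset.sum_congr rfl fun y _ => ?_
        rw [← Finset.sum_mul, hqX y]
    have rhs_eq : ∑ x ∈ SX, ∑ y ∈ SY, (pX x * pY y - q x y) = 0 := by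
      simp only [Finset.sum_sub_distrib]
      rw [← Finset.sum_mul_sum, hX1, hY1]
      rw [Finset.sum_congr rfl fun x _ => hqY x, hX1]
      norm_num
    rw [lhs_eq, rhs_eq] at hsum
    linarith
  -- identify the entropies
  have hsubAX : Finset.univ.image (fun ω => (A ω, X ω)) ⊆ SA ×ˢ SX := by
    intro b hb
    simp only [Finset.mem_image] at hb
    obtain ⟨ω, _, rfl⟩ := hb
    rw [Finset.mem_product]
    exact ⟨Finset.mem_image_of_mem A (Finset.mem_univ ω),
      Finset.mem_image_of_mem X (Finset.mem_univ ω)⟩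
  have hsubAY : Finset.univ.image (fun ω => (A ω, Y ω)) ⊆ SA ×ˢ SY := by
    intro b hb
    simp only [Finset.mem_image] at hb
    obtain ⟨ω, _, rfl⟩ := hb
    rw [Finset.mem_product]
    exact ⟨Finset.mem_image_of_mem A (Finset.mem_univ ω),
      Finset.mem_image_of_mem Y (Finset.mem_univ ω)⟩
  have hAXent : entropy μ (fun ω => (A ω, X ω))
      = -∑ a ∈ SA, ∑ x ∈ SX, pAX a x * Real.log (pAX a x) := by
    rw [entropy_eq_sum_subset μ _ _ hsubAX]
    congr 1
    rw [Finset.sum_product]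
    refine Finset.sum_congr rfl fun a _ => Finset.sum_congr rfl fun x _ => ?_
    have e : (∑ ω ∈ Finset.univ.filter (fun ω => (A ω, X ω) = (a, x)), μ ω) = pAX a x := by
      simp only [hpAX, jointPMF]
      congr 1
      apply Finset.filter_congr
      intro ω _
      simp [Prod.ext_iff]
    rw [e]
  have hAYent : entropy μ (fun ω => (A ω, Y ω))
      = -∑ a ∈ SA, ∑ y ∈ SY, pAY a y * Real.log (pAY a y) := by
    rw [entropy_eq_sum_subset μ _ _ hsubAY]
    congr 1
    rw [Finset.sum_product]
    refine Finset.sum_congr rfl fun a _ => Finset.sum_congr rfl fun y _ => ?_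
    have e : (∑ ω ∈ Finset.univ.filter (fun ω => (A ω, Y ω) = (a, y)), μ ω) = pAY a y := by
      simp only [hpAY, jointPMF]
      congr 1
      apply Finset.filter_congr
      intro ω _
      simp [Prod.ext_iff]
    rw [e]
  have hXent : entropy μ X = -∑ x ∈ SX, pX x * Real.log (pX x) := rfl
  have hYent : entropy μ Y = -∑ y ∈ SY, pY y * Real.log (pY y) := rfl
  have hAent : entropy μ A = -∑ a ∈ SA, pA a * Real.log (pA a) := rfl
  simp only [condEntropy]
  rw [hAXent, hAYent, hXent, hYent, hAent]
  linarith [keyA, hsub]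
end

section
/- Generalized conditional entropy inequality: Let A, X, Y be discrete random variables taking values in sets 𝒜, 𝒳, 𝒴, with joint probability mass function P_{A,X,Y}. Define m = sup over (x,y) ∈ 𝒳 × 𝒴 of the cardinality of {a ∈ 𝒜 : P_{A,X}(a,x) · P_{A,Y}(a,y) > 0}. Then H(A | X) + H(A | Y) ≤ H(A) + log m. -/
/-!
Couple `P_{A,X}` and `P_{A,Y}` by making `X` and `Y` conditionally independent given `A`:
`q(a, x, y) = P_{A,X}(a, x) P_{A,Y}(a, y) / P_A(a)`. Under `q`, the quantity
`H(A|X) + H(A|Y) - H(A)` is the expectation of `log (P_X(x) P_Y(y) / q(a, x, y))`, so by Jensen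
it is at most the log of the `P_X ⊗ P_Y`-mass of the support of `q`. Above each pair `(x, y)`
that support has at most `m` points, and `P_X ⊗ P_Y` has total mass `1`.
-/

open Real Finset

theorem sum_mul_log_div_le_log {ι : Type*} {s : Finset ι} {w r : ι → ℝ}
    (hw : ∀ i ∈ s, 0 ≤ w i) (hw1 : ∑ i ∈ s, w i = 1) (hr : ∀ i ∈ s, w i ≠ 0 → 0 < r i)
    {M : ℝ} (hM : ∑ i ∈ s with w i ≠ 0, r i ≤ M) :
    ∑ i ∈ s, w i * log (r i / w i) ≤ log M := by
  set t := s.filter (w · ≠ 0)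
  have ht : ∀ i ∈ t, i ∈ s ∧ w i ≠ 0 := fun i hi => mem_filter.mp hi
  have hwt : ∑ i ∈ t, w i = 1 := by
    rw [sum_filter_ne_zero, hw1]
  have hjensen := strictConcaveOn_log_Ioi.concaveOn.le_map_sum (t := t) (p := fun i => r i / w i)
    (fun i hi => hw i (ht i hi).1) hwt
    (fun i hi => div_pos (hr i (ht i hi).1 (ht i hi).2) ((hw i (ht i hi).1).lt_of_ne' (ht i hi).2))
  have hsum : ∑ i ∈ t, w i • (r i / w i) = ∑ i ∈ t, r i :=
    sum_congr rfl fun i hi => by rw [smul_eq_mul, mul_div_cancel₀ _ (ht i hi).2]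
  have hpos : 0 < ∑ i ∈ t, r i := by
    obtain ⟨i, hi⟩ := nonempty_of_sum_ne_zero (hwt ▸ one_ne_zero : ∑ i ∈ t, w i ≠ 0)
    exact sum_pos (fun j hj => hr j (ht j hj).1 (ht j hj).2) ⟨i, hi⟩
  rw [← sum_filter_of_ne fun i _ hi => left_ne_zero_of_mul hi]
  exact (hsum ▸ hjensen).trans (log_le_log hpos hM)

noncomputable def condEntropyOfPMF {α β : Type*} [Fintype α] [Fintype β] (P : α → β → ℝ) : ℝ :=
  ∑ a, ∑ x, P a x * log ((∑ a', P a' x) / P a x)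

theorem sum_pos_of_ne_zero {α : Type*} [Fintype α] {f : α → ℝ} (hf : ∀ a, 0 ≤ f a) {a : α}
    (ha : f a ≠ 0) : 0 < ∑ a', f a' :=
  sum_pos' (fun a _ => hf a) ⟨a, mem_univ a, (hf a).lt_of_ne' ha⟩

section Coupling

variable {α β γ : Type*} {P : α → β → ℝ} {Q : α → γ → ℝ} {p : α → ℝ}

/-- The law of `(A, X, Y)` under which `X` and `Y` are conditionally independent given `A`,
with `(A, X) ∼ P` and `(A, Y) ∼ Q`. -/
noncomputable def condIndepCoupling (P : α → β → ℝ) (Q : α → γ → ℝ) (p : α → ℝ)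
    (a : α) (x : β) (y : γ) : ℝ :=
  P a x * Q a y / p a

theorem condIndepCoupling_comm (a : α) (x : β) (y : γ) :
    condIndepCoupling P Q p a x y = condIndepCoupling Q P p a y x := by
  rw [condIndepCoupling, condIndepCoupling, mul_comm]

theorem sum_condIndepCoupling_right [Fintype β] [Fintype γ] (hP : ∀ a x, 0 ≤ P a x)
    (hPp : ∀ a, ∑ x, P a x = p a) (hQp : ∀ a, ∑ y, Q a y = p a) (a : α) (x : β) :
    ∑ y, condIndepCoupling P Q p a x y = P a x := by
  by_cases ha : p a = 0
  · have hPa := (sum_eq_zero_iff_of_nonneg fun x _ => hP a x).mp (hPp a ▸ ha) x (mem_univ x)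
    simp [condIndepCoupling, ha, hPa]
  · simp only [condIndepCoupling, ← sum_div, ← mul_sum, hQp, mul_div_cancel_right₀ _ ha]

theorem sum_condIndepCoupling_left [Fintype β] [Fintype γ] (hQ : ∀ a y, 0 ≤ Q a y)
    (hPp : ∀ a, ∑ x, P a x = p a) (hQp : ∀ a, ∑ y, Q a y = p a) (a : α) (y : γ) :
    ∑ x, condIndepCoupling P Q p a x y = Q a y := by
  rw [sum_congr rfl fun x _ => condIndepCoupling_comm a x y]
  exact sum_condIndepCoupling_right hQ hQp hPp a y

theorem condIndepCoupling_ne_zero_iff {a : α} {x : β} {y : γ} :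
    condIndepCoupling P Q p a x y ≠ 0 ↔ P a x ≠ 0 ∧ Q a y ≠ 0 ∧ p a ≠ 0 := by
  rw [condIndepCoupling, div_ne_zero_iff, mul_ne_zero_iff, and_assoc]

theorem condIndepCoupling_mul_log [Fintype α] (hP : ∀ a x, 0 ≤ P a x) (hQ : ∀ a y, 0 ≤ Q a y)
    (a : α) (x : β) (y : γ) :
    condIndepCoupling P Q p a x y *
        log ((∑ a', P a' x) * (∑ a', Q a' y) / condIndepCoupling P Q p a x y) =
      condIndepCoupling P Q p a x y * log ((∑ a', P a' x) / P a x) +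
        condIndepCoupling P Q p a x y * log ((∑ a', Q a' y) / Q a y) +
          condIndepCoupling P Q p a x y * log (p a) := by
  by_cases hq : condIndepCoupling P Q p a x y = 0
  · simp [hq]
  obtain ⟨hPax, hQay, hp⟩ := condIndepCoupling_ne_zero_iff.mp hq
  have hPx := (sum_pos_of_ne_zero (hP · x) hPax).ne'
  have hQy := (sum_pos_of_ne_zero (hQ · y) hQay).ne'
  rw [← mul_add, ← mul_add, ← log_mul (by positivity) (by positivity),
    ← log_mul (by positivity) hp]
  congr 2
  simp only [condIndepCoupling]
  field_simp

theorem sum_condIndepCoupling_mul_log_div [Fintype α] [Fintype β] [Fintype γ]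
    (hP : ∀ a x, 0 ≤ P a x) (hQ : ∀ a y, 0 ≤ Q a y)
    (hPp : ∀ a, ∑ x, P a x = p a) (hQp : ∀ a, ∑ y, Q a y = p a) :
    ∑ a, ∑ x, ∑ y, condIndepCoupling P Q p a x y *
        log ((∑ a', P a' x) * (∑ a', Q a' y) / condIndepCoupling P Q p a x y) =
      condEntropyOfPMF P + condEntropyOfPMF Q - ∑ a, negMulLog (p a) := by
  have hX : ∑ a, ∑ x, ∑ y, condIndepCoupling P Q p a x y * log ((∑ a', P a' x) / P a x) =
      condEntropyOfPMF P := by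
    simp_rw [← sum_mul, sum_condIndepCoupling_right hP hPp hQp]
    rfl
  have hY : ∑ a, ∑ x, ∑ y, condIndepCoupling P Q p a x y * log ((∑ a', Q a' y) / Q a y) =
      condEntropyOfPMF Q := by
    refine (sum_congr rfl fun a _ => sum_comm).trans ?_
    simp_rw [← sum_mul, sum_condIndepCoupling_left hQ hPp hQp]
    rfl
  have hA : ∑ a, ∑ x, ∑ y, condIndepCoupling P Q p a x y * log (p a) =
      -∑ a, negMulLog (p a) := by
    simp_rw [← sum_mul, sum_condIndepCoupling_right hP hPp hQp, hPp, negMulLog_eq_neg,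
      sum_neg_distrib, neg_neg]
  simp_rw [condIndepCoupling_mul_log hP hQ, sum_add_distrib]
  rw [hX, hY, hA, sub_eq_add_neg]

theorem sum_support_condIndepCoupling_le [Fintype α] [Fintype β] [Fintype γ]
    (hP : ∀ a x, 0 ≤ P a x) (hQ : ∀ a y, 0 ≤ Q a y)
    (hPp : ∀ a, ∑ x, P a x = p a) (hQp : ∀ a, ∑ y, Q a y = p a) (hp : ∑ a, p a = 1) {m : ℝ}
    (hm : ∀ x y, (#{a | 0 < P a x * Q a y} : ℝ) ≤ m) :
    ∑ i ∈ (univ : Finset (α × β × γ)) with condIndepCoupling P Q p i.1 i.2.1 i.2.2 ≠ 0,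
      (∑ a', P a' i.2.1) * (∑ a', Q a' i.2.2) ≤ m := by
  have hsupport : ∀ i ∈ (univ : Finset (α × β × γ)),
      condIndepCoupling P Q p i.1 i.2.1 i.2.2 ≠ 0 → 0 < P i.1 i.2.1 * Q i.1 i.2.2 := by
    rintro ⟨a, x, y⟩ - hq
    obtain ⟨hPax, hQay, -⟩ := condIndepCoupling_ne_zero_iff.mp hq
    exact mul_pos ((hP a x).lt_of_ne' hPax) ((hQ a y).lt_of_ne' hQay)
  have hX : ∑ x, ∑ a, P a x = 1 := by rw [sum_comm]; simp_rw [hPp]; exact hp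
  have hY : ∑ y, ∑ a, Q a y = 1 := by rw [sum_comm]; simp_rw [hQp]; exact hp
  calc _ ≤ ∑ i ∈ (univ : Finset (α × β × γ)) with 0 < P i.1 i.2.1 * Q i.1 i.2.2,
        (∑ a', P a' i.2.1) * (∑ a', Q a' i.2.2) :=
      sum_le_sum_of_subset_of_nonneg (monotone_filter_right _ hsupport) fun i _ _ =>
        mul_nonneg (sum_nonneg fun a' _ => hP a' _) (sum_nonneg fun a' _ => hQ a' _)
    _ = ∑ x, ∑ y, (#{a | 0 < P a x * Q a y} : ℝ) * ((∑ a', P a' x) * (∑ a', Q a' y)) := by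
      simp only [sum_filter, Fintype.sum_prod_type]
      rw [sum_comm]
      refine sum_congr rfl fun x _ => ?_
      rw [sum_comm]
      refine sum_congr rfl fun y _ => ?_
      rw [← sum_filter, sum_const, nsmul_eq_mul]
    _ ≤ ∑ x, ∑ y, m * ((∑ a', P a' x) * (∑ a', Q a' y)) := by
      gcongr with x _ y _
      · exact mul_nonneg (sum_nonneg fun a' _ => hP a' _) (sum_nonneg fun a' _ => hQ a' _)
      · exact hm x y
    _ = m := by
      simp_rw [← mul_sum]
      rw [← sum_mul, hX, hY, one_mul, mul_one]

theorem condEntropyOfPMF_add_le [Fintype α] [Fintype β] [Fintype γ]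
    (hP : ∀ a x, 0 ≤ P a x) (hQ : ∀ a y, 0 ≤ Q a y)
    (hPp : ∀ a, ∑ x, P a x = p a) (hQp : ∀ a, ∑ y, Q a y = p a) (hp : ∑ a, p a = 1) {m : ℝ}
    (hm : ∀ x y, (#{a | 0 < P a x * Q a y} : ℝ) ≤ m) :
    condEntropyOfPMF P + condEntropyOfPMF Q ≤ ∑ a, negMulLog (p a) + log m := by
  have hq_nonneg : ∀ a x y, 0 ≤ condIndepCoupling P Q p a x y := fun a x y =>
    div_nonneg (mul_nonneg (hP a x) (hQ a y)) ((hPp a).symm ▸ sum_nonneg fun x _ => hP a x)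
  have hq_total : ∑ i : α × β × γ, condIndepCoupling P Q p i.1 i.2.1 i.2.2 = 1 := by
    simp only [Fintype.sum_prod_type, sum_condIndepCoupling_right hP hPp hQp, hPp, hp]
  have hr_pos : ∀ i ∈ (univ : Finset (α × β × γ)), condIndepCoupling P Q p i.1 i.2.1 i.2.2 ≠ 0 →
      0 < (∑ a', P a' i.2.1) * (∑ a', Q a' i.2.2) := by
    rintro ⟨a, x, y⟩ - hq
    obtain ⟨hPax, hQay, -⟩ := condIndepCoupling_ne_zero_iff.mp hq
    exact mul_pos (sum_pos_of_ne_zero (hP · x) hPax) (sum_pos_of_ne_zero (hQ · y) hQay)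
  have hgibbs := sum_mul_log_div_le_log (fun i _ => hq_nonneg i.1 i.2.1 i.2.2) hq_total hr_pos
    (sum_support_condIndepCoupling_le hP hQ hPp hQp hp hm)
  simp only [Fintype.sum_prod_type, sum_condIndepCoupling_mul_log_div hP hQ hPp hQp] at hgibbs
  linarith

end Coupling

section RandomVariables

variable {Ω α β : Type*} [Fintype Ω] (μ : Ω → ℝ)

noncomputable def marginalPMF [DecidableEq β] (X : Ω → β) (b : β) : ℝ :=
  ∑ ω with X ω = b, μ ω

theorem entropy_eq_sum_negMulLog [Fintype β] [DecidableEq β] (X : Ω → β) :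
    entropy μ X = ∑ b, negMulLog (marginalPMF μ X b) := by
  rw [entropy, ← sum_neg_distrib]
  simp only [marginalPMF, negMulLog_eq_neg]
  refine sum_subset (subset_univ (univ.image X)) fun b _ hb => ?_
  have hempty : univ.filter (fun ω => X ω = b) = ∅ :=
    filter_eq_empty_iff.mpr fun ω _ hω => hb (hω ▸ mem_image_of_mem X (mem_univ ω))
  simp [hempty]

theorem marginalPMF_prodMk [DecidableEq α] [DecidableEq β] (A : Ω → α) (X : Ω → β)
    (a : α) (x : β) :
    marginalPMF μ (fun ω => (A ω, X ω)) (a, x) = jointPMF μ A X a x := by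
  simp only [marginalPMF, jointPMF, Prod.mk.injEq]

theorem jointPMF_comm [DecidableEq α] [DecidableEq β] (A : Ω → α) (X : Ω → β)
    (a : α) (x : β) :
    jointPMF μ A X a x = jointPMF μ X A x a := by
  simp only [jointPMF, and_comm]

theorem sum_jointPMF_right [Fintype β] [DecidableEq α] [DecidableEq β] (A : Ω → α)
    (X : Ω → β) (a : α) :
    ∑ x, jointPMF μ A X a x = marginalPMF μ A a := by
  simp only [jointPMF, marginalPMF, ← filter_filter]
  exact sum_fiberwise _ X μ

theorem sum_jointPMF_left [Fintype α] [DecidableEq α] [DecidableEq β] (A : Ω → α)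
    (X : Ω → β) (x : β) :
    ∑ a, jointPMF μ A X a x = marginalPMF μ X x := by
  simp_rw [jointPMF_comm μ A X _ x]
  exact sum_jointPMF_right μ X A x

theorem sum_marginalPMF [Fintype β] [DecidableEq β] (X : Ω → β) :
    ∑ b, marginalPMF μ X b = ∑ ω, μ ω :=
  sum_fiberwise _ X μ

theorem jointPMF_nonneg [DecidableEq α] [DecidableEq β] (hμ : ∀ ω, 0 ≤ μ ω) (A : Ω → α)
    (X : Ω → β) (a : α) (x : β) :
    0 ≤ jointPMF μ A X a x :=
  sum_nonneg fun ω _ => hμ ω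

theorem condEntropy_eq_condEntropyOfPMF [Fintype α] [Fintype β] [DecidableEq α]
    [DecidableEq β] (hμ : ∀ ω, 0 ≤ μ ω) (A : Ω → α) (X : Ω → β) :
    condEntropy μ A X = condEntropyOfPMF (jointPMF μ A X) := by
  set P := jointPMF μ A X
  have hP : ∀ a x, 0 ≤ P a x := jointPMF_nonneg μ hμ A X
  have hpoint : ∀ a x, P a x * log ((∑ a', P a' x) / P a x) =
      negMulLog (P a x) + P a x * log (∑ a', P a' x) := by
    intro a x
    by_cases hPax : P a x = 0
    · simp [hPax]
    rw [log_div (sum_pos_of_ne_zero (hP · x) hPax).ne' hPax, negMulLog]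
    ring
  rw [condEntropy, condEntropyOfPMF, entropy_eq_sum_negMulLog, entropy_eq_sum_negMulLog,
    Fintype.sum_prod_type]
  simp_rw [marginalPMF_prodMk, ← sum_jointPMF_left μ A X, hpoint, sum_add_distrib]
  rw [sum_comm (f := fun a x => P a x * log (∑ a', P a' x))]
  simp only [← sum_mul, negMulLog_eq_neg, sum_neg_distrib, sub_neg_eq_add]
  rfl

end RandomVariables

/-- **Generalized conditional entropy inequality.** With
`m = sup_{(x,y)} |{a : P_{A,X}(a,x) · P_{A,Y}(a,y) > 0}|`, one has
`H(A|X) + H(A|Y) ≤ H(A) + log m`. -/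
theorem generalized_conditional_entropy_inequality {Ω 𝒜 𝒳 𝒴 : Type*} [Fintype Ω]
    [Fintype 𝒜] [Fintype 𝒳] [Fintype 𝒴]
    [DecidableEq 𝒜] [DecidableEq 𝒳] [DecidableEq 𝒴]
    (μ : Ω → ℝ) (hμ0 : ∀ ω, 0 ≤ μ ω) (hμ1 : ∑ ω, μ ω = 1)
    (A : Ω → 𝒜) (X : Ω → 𝒳) (Y : Ω → 𝒴) :
    condEntropy μ A X + condEntropy μ A Y ≤
      entropy μ A +
        Real.log
          ((Finset.univ.sup fun p : 𝒳 × 𝒴 =>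
            (Finset.univ.filter fun a : 𝒜 =>
              0 < jointPMF μ A X a p.1 * jointPMF μ A Y a p.2).card) : ℕ) := by
  rw [condEntropy_eq_condEntropyOfPMF μ hμ0, condEntropy_eq_condEntropyOfPMF μ hμ0,
    entropy_eq_sum_negMulLog]
  refine condEntropyOfPMF_add_le (jointPMF_nonneg μ hμ0 A X) (jointPMF_nonneg μ hμ0 A Y)
    (sum_jointPMF_right μ A X) (sum_jointPMF_right μ A Y) (by rw [sum_marginalPMF, hμ1])
    fun x y => ?_
  exact_mod_cast le_sup (f := fun p : 𝒳 × 𝒴 =>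
    #{a | 0 < jointPMF μ A X a p.1 * jointPMF μ A Y a p.2}) (mem_univ (x, y))
end

section
/- Let G be a finite bipartite graph whose left vertices all have degree at least d_L and whose right vertices all have degree at least d_R. Consider a proper edge coloring of G (adjacent edges receive different colors) with the additional property that for every pair consisting of a left vertex u and a right vertex v, at most m colors appear both on some edge incident to u and on some edge incident to v. Then the total number of colors used is at least d_L · d_R / m. -/
open Finset


/-- Lower bound on the number of colors in a constrained edge coloring of a bipartite
graph. The bipartite graph has left vertices `U` (nonempty), right vertices `V`, and
edge set `E ⊆ U × V`; every left vertex has degree at least `dL` and every right vertex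
has degree at least `dR`. The coloring `c` is proper (edges sharing a vertex get
different colors) and, for every pair of a left vertex `u` and a right vertex `v`, at
most `m` colors touch both `u` and `v`. Then at least `dL · dR / m` colors are used. -/
theorem edge_coloring_lower_bound {U V C : Type*} [Fintype U] [Fintype V]
    [DecidableEq U] [DecidableEq V] [DecidableEq C] [Nonempty U]
    (E : Finset (U × V)) (c : U × V → C) (dL dR m : ℕ)
    (hdL : ∀ u : U, dL ≤ (E.filter fun e => e.1 = u).card)
    (hdR : ∀ v : V, dR ≤ (E.filter fun e => e.2 = v).card)
    (hproper : ∀ e ∈ E, ∀ e' ∈ E, e ≠ e' → (e.1 = e'.1 ∨ e.2 = e'.2) → c e ≠ c e')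
    (hrich : ∀ (u : U) (v : V),
      ((E.image c).filter fun γ =>
        (∃ v' : V, (u, v') ∈ E ∧ c (u, v') = γ) ∧
        (∃ u' : U, (u', v) ∈ E ∧ c (u', v) = γ)).card ≤ m) :
    ((dL : ℝ) * dR) / m ≤ ((E.image c).card : ℝ) := by
  -- reduce to the natural number inequality dL * dR ≤ K * m
  set K := E.image c with hK
  suffices h : dL * dR ≤ K.card * m by
    rcases Nat.eq_zero_or_pos m with hm | hm
    · simp [hm]
    · rw [div_le_iff₀ (by exact_mod_cast hm)]
      exact_mod_cast h
  -- dispose of the case dL = 0 / dR = 0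
  rcases Nat.eq_zero_or_pos dL with h0 | hdLpos
  · simp [h0]
  rcases Nat.eq_zero_or_pos dR with h0 | hdRpos
  · simp [h0]
  -- E is nonempty, hence V is nonempty
  obtain ⟨u0⟩ := ‹Nonempty U›
  have hEne : (E.filter fun e => e.1 = u0).Nonempty := by
    rw [← card_pos]; exact lt_of_lt_of_le hdLpos (hdL u0)
  obtain ⟨e0, he0⟩ := hEne
  haveI : Nonempty V := ⟨e0.2⟩
  -- color classes
  set n : C → ℕ := fun γ => (E.filter fun e => c e = γ).card with hn
  -- each color class is a matching: its projections are injective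
  have hfst : ∀ γ, ((E.filter fun e => c e = γ).image Prod.fst).card = n γ := by
    intro γ
    apply card_image_of_injOn
    intro e he e' he' hee
    simp only [mem_coe, mem_filter] at he he'
    by_contra hne
    exact hproper e he.1 e' he'.1 hne (Or.inl hee) (he.2.trans he'.2.symm)
  have hsnd : ∀ γ, ((E.filter fun e => c e = γ).image Prod.snd).card = n γ := by
    intro γ
    apply card_image_of_injOn
    intro e he e' he' hee
    simp only [mem_coe, mem_filter] at he he'
    by_contra hne
    exact hproper e he.1 e' he'.1 hne (Or.inr hee) (he.2.trans he'.2.symm)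
  -- |E| = ∑ n γ
  have hEcard : E.card = ∑ γ ∈ K, n γ := card_eq_sum_card_image c E
  -- degree sums
  have hU : dL * Fintype.card U ≤ E.card := by
    calc dL * Fintype.card U = ∑ _u : U, dL := by simp [mul_comm]
    _ ≤ ∑ u : U, (E.filter fun e => e.1 = u).card := sum_le_sum fun u _ => hdL u
    _ = E.card := (card_eq_sum_card_fiberwise fun e _ => mem_univ e.1).symm
  have hV : dR * Fintype.card V ≤ E.card := by
    calc dR * Fintype.card V = ∑ _v : V, dR := by simp [mul_comm]
    _ ≤ ∑ v : V, (E.filter fun e => e.2 = v).card := sum_le_sum fun v _ => hdR v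
    _ = E.card := (card_eq_sum_card_fiberwise fun e _ => mem_univ e.2).symm
  -- double counting: ∑_γ n γ ^ 2 ≤ m * |U| * |V|
  have hdc : ∑ γ ∈ K, n γ ^ 2 ≤ m * (Fintype.card U * Fintype.card V) := by
    have key : ∑ γ ∈ K, n γ ^ 2 =
        ∑ u : U, ∑ v : V, ((K.filter fun γ =>
          (∃ v' : V, (u, v') ∈ E ∧ c (u, v') = γ) ∧
          (∃ u' : U, (u', v) ∈ E ∧ c (u', v) = γ)).card) := by
      have h1 : ∀ (u : U) (v : V), (K.filter fun γ =>
          (∃ v' : V, (u, v') ∈ E ∧ c (u, v') = γ) ∧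
          (∃ u' : U, (u', v) ∈ E ∧ c (u', v) = γ)).card
          = ∑ γ ∈ K, (if ((∃ v' : V, (u, v') ∈ E ∧ c (u, v') = γ) ∧
            (∃ u' : U, (u', v) ∈ E ∧ c (u', v) = γ)) then 1 else 0) := by
        intro u v
        rw [← sum_filter, card_eq_sum_ones]
      have hsplit : ∀ (p q : Prop) [Decidable p] [Decidable q],
          (if p ∧ q then (1:ℕ) else 0) = (if p then 1 else 0) * (if q then 1 else 0) := by
        intro p q _ _
        by_cases hp : p <;> by_cases hq : q <;> simp [hp, hq]
      have hPu : ∀ γ : C,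
          (∑ u : U, if (∃ v' : V, (u, v') ∈ E ∧ c (u, v') = γ) then 1 else 0) = n γ := by
        intro γ
        rw [Finset.sum_boole]
        rw [← hfst γ]
        norm_cast
        congr 1
        ext u
        simp only [mem_filter, mem_univ, true_and, mem_image, Prod.exists]
        constructor
        · rintro ⟨v', h1, h2⟩
          exact ⟨u, v', ⟨h1, h2⟩, rfl⟩
        · rintro ⟨a, b, hab, rfl⟩
          exact ⟨b, hab.1, hab.2⟩
      have hQv : ∀ γ : C,
          (∑ v : V, if (∃ u' : U, (u', v) ∈ E ∧ c (u', v) = γ) then 1 else 0) = n γ := by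
        intro γ
        rw [Finset.sum_boole]
        rw [← hsnd γ]
        norm_cast
        congr 1
        ext v
        simp only [mem_filter, mem_univ, true_and, mem_image, Prod.exists]
        constructor
        · rintro ⟨u', h1, h2⟩
          exact ⟨u', v, ⟨h1, h2⟩, rfl⟩
        · rintro ⟨a, b, hab, rfl⟩
          exact ⟨a, hab.1, hab.2⟩
      simp_rw [h1, hsplit]
      rw [show (∑ u : U, ∑ v : V, ∑ γ ∈ K,
          (if (∃ v' : V, (u, v') ∈ E ∧ c (u, v') = γ) then (1:ℕ) else 0) *
          (if (∃ u' : U, (u', v) ∈ E ∧ c (u', v) = γ) then 1 else 0))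
          = ∑ γ ∈ K, ∑ u : U, ∑ v : V,
          (if (∃ v' : V, (u, v') ∈ E ∧ c (u, v') = γ) then (1:ℕ) else 0) *
          (if (∃ u' : U, (u', v) ∈ E ∧ c (u', v) = γ) then 1 else 0) from by
        rw [show ∀ (f : U → V → C → ℕ), (∑ u : U, ∑ v : V, ∑ γ ∈ K, f u v γ)
            = ∑ γ ∈ K, ∑ u : U, ∑ v : V, f u v γ from fun f => by
          rw [show (∑ u : U, ∑ v : V, ∑ γ ∈ K, f u v γ)
              = ∑ u : U, ∑ γ ∈ K, ∑ v : V, f u v γ from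
            sum_congr rfl fun u _ => sum_comm]
          exact sum_comm]]
      refine sum_congr rfl fun γ _ => ?_
      rw [← Finset.sum_mul_sum, hPu γ, hQv γ, sq]
    rw [key]
    calc ∑ u : U, ∑ v : V, _ ≤ ∑ _u : U, ∑ _v : V, m :=
      sum_le_sum fun u _ => sum_le_sum fun v _ => hrich u v
    _ = m * (Fintype.card U * Fintype.card V) := by simp; ring
  -- Cauchy-Schwarz
  have hCS : E.card ^ 2 ≤ K.card * ∑ γ ∈ K, n γ ^ 2 := by
    rw [hEcard]
    have := sq_sum_le_card_mul_sum_sq (s := K) (f := fun γ => (n γ : ℤ))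
    exact_mod_cast (by push_cast at this ⊢; exact_mod_cast this : (((∑ γ ∈ K, n γ : ℕ)) ^ 2 : ℤ) ≤ (K.card : ℤ) * ∑ γ ∈ K, (n γ : ℤ) ^ 2)
  -- combine
  have main : (dL * dR) * (Fintype.card U * Fintype.card V) ≤
      (K.card * m) * (Fintype.card U * Fintype.card V) := by
    calc (dL * dR) * (Fintype.card U * Fintype.card V)
        = (dL * Fintype.card U) * (dR * Fintype.card V) := by ring
    _ ≤ E.card * E.card := Nat.mul_le_mul hU hV
    _ = E.card ^ 2 := (sq _).symm
    _ ≤ K.card * ∑ γ ∈ K, n γ ^ 2 := hCS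
    _ ≤ K.card * (m * (Fintype.card U * Fintype.card V)) := Nat.mul_le_mul_left _ hdc
    _ = (K.card * m) * (Fintype.card U * Fintype.card V) := by ring
  have hpos : 0 < Fintype.card U * Fintype.card V :=
    Nat.mul_pos Fintype.card_pos Fintype.card_pos
  exact Nat.le_of_mul_le_mul_right main hpos
end

section
/- Let G be a d-regular finite bipartite graph, and consider a proper edge coloring of G such that for every pair consisting of a left vertex and a right vertex, at most m colors touch both vertices, where m < d. Then the number of colors used is at least d^2 / m, which is strictly larger than the maximal degree d. -/
/-!
Let `k γ` be the number of edges of colour `γ`. Two edges `(u, v)`, `(u', v')` of colour `γ` give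
the pair `(u, v')`, which `γ` touches on both sides, and by properness this pair determines the two
edges. Hence `∑ γ, k γ ^ 2` is at most the number of (pair, colour touching both ends) incidences,
which is at most `m |U| |V|`. Since `∑ γ, k γ = |E| = d |U| = d |V|`, Cauchy–Schwarz gives
`d ^ 2 |U| |V| ≤ #colours · m |U| |V|`.
-/

open Finset

theorem Finset.card_eq_mul_card_of_card_fiber_eq {ι M : Type*} [Fintype M] [DecidableEq M]
    (s : Finset ι) (f : ι → M) {d : ℕ} (h : ∀ b, #{a ∈ s | f a = b} = d) :
    #s = d * Fintype.card M := by
  rw [card_eq_sum_card_fiberwise (t := univ) fun a _ => mem_univ (f a)]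
  simp only [h, sum_const, card_univ, smul_eq_mul, mul_comm]

section EdgeColoring

variable {U V C : Type*} [Fintype U] [Fintype V] [DecidableEq U] [DecidableEq V] [DecidableEq C]

def IsProperEdgeColoring (E : Finset (U × V)) (c : U × V → C) : Prop :=
  ∀ e ∈ E, ∀ e' ∈ E, e ≠ e' → (e.1 = e'.1 ∨ e.2 = e'.2) → c e ≠ c e'

def commonColors (E : Finset (U × V)) (c : U × V → C) (u : U) (v : V) : Finset C :=
  (E.image c).filter fun γ =>
    (∃ v' : V, (u, v') ∈ E ∧ c (u, v') = γ) ∧ (∃ u' : U, (u', v) ∈ E ∧ c (u', v) = γ)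

variable {E : Finset (U × V)} {c : U × V → C}

theorem sq_card_fiber_le_card_mem_commonColors (hc : IsProperEdgeColoring E c) {γ : C}
    (hγ : γ ∈ E.image c) :
    #{e ∈ E | c e = γ} ^ 2 ≤ #{p : U × V | γ ∈ commonColors E c p.1 p.2} := by
  rw [sq, ← card_product]
  refine card_le_card_of_injOn (fun q => (q.1.1, q.2.2)) ?_ ?_
  · rintro ⟨⟨u, v⟩, ⟨u', v'⟩⟩ hq
    simp only [coe_product, coe_filter, Set.mem_prod, Set.mem_ofPred_eq] at hq
    simp only [commonColors, coe_filter, mem_filter, mem_univ, true_and, Set.mem_ofPred_eq]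
    exact ⟨hγ, ⟨v, hq.1⟩, ⟨u', hq.2⟩⟩
  · rintro ⟨e₁, e₁'⟩ hq ⟨e₂, e₂'⟩ hq' hends
    simp only [coe_product, coe_filter, Set.mem_prod, Set.mem_ofPred_eq] at hq hq'
    simp only [Prod.mk.injEq] at hends ⊢
    constructor <;> by_contra hne
    · exact hc _ hq.1.1 _ hq'.1.1 hne (.inl hends.1) (hq.1.2.trans hq'.1.2.symm)
    · exact hc _ hq.2.1 _ hq'.2.1 hne (.inr hends.2) (hq.2.2.trans hq'.2.2.symm)

theorem sum_sq_card_fiber_le_sum_card_commonColors (hc : IsProperEdgeColoring E c) :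
    ∑ γ ∈ E.image c, #{e ∈ E | c e = γ} ^ 2 ≤ ∑ p : U × V, #(commonColors E c p.1 p.2) :=
  calc ∑ γ ∈ E.image c, #{e ∈ E | c e = γ} ^ 2
      ≤ ∑ γ ∈ E.image c, #{p : U × V | γ ∈ commonColors E c p.1 p.2} :=
        sum_le_sum fun γ hγ => sq_card_fiber_le_card_mem_commonColors hc hγ
    _ = ∑ p : U × V, #((E.image c).bipartiteAbove (fun p γ => γ ∈ commonColors E c p.1 p.2) p) :=
        (sum_card_bipartiteAbove_eq_sum_card_bipartiteBelow _).symm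
    _ = ∑ p : U × V, #(commonColors E c p.1 p.2) := by
        congr! 2 with p
        exact filter_mem_eq_inter.trans (inter_eq_right.mpr (filter_subset _ _))

theorem sq_card_le_card_image_mul_sum_card_commonColors (hc : IsProperEdgeColoring E c) :
    #E ^ 2 ≤ #(E.image c) * ∑ p : U × V, #(commonColors E c p.1 p.2) :=
  calc #E ^ 2 = (∑ γ ∈ E.image c, #{e ∈ E | c e = γ}) ^ 2 := by rw [← card_eq_sum_card_image]
    _ ≤ #(E.image c) * ∑ γ ∈ E.image c, #{e ∈ E | c e = γ} ^ 2 := sq_sum_le_card_mul_sum_sq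
    _ ≤ #(E.image c) * ∑ p : U × V, #(commonColors E c p.1 p.2) := by
        gcongr
        exact sum_sq_card_fiber_le_sum_card_commonColors hc

end EdgeColoring

theorem sq_div_le_and_lt_sq_div {d m k : ℕ} (h : d ^ 2 ≤ k * m) (hm : m < d) :
    (d : ℝ) ^ 2 / m ≤ k ∧ (d : ℝ) < (d : ℝ) ^ 2 / m := by
  have hm0 : 0 < m := Nat.pos_of_mul_pos_left ((pow_pos (m.zero_le.trans_lt hm) 2).trans_le h)
  have hmR : (0 : ℝ) < m := by exact_mod_cast hm0
  have hmd : (m : ℝ) < d := by exact_mod_cast hm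
  rw [div_le_iff₀ hmR, lt_div_iff₀ hmR]
  exact ⟨by exact_mod_cast h, by nlinarith⟩

/-- Refinement of Vizing's theorem for regular bipartite graphs under a richness
constraint. The bipartite graph has left vertices `U` (nonempty), right vertices `V`,
edge set `E ⊆ U × V`, and is `d`-regular. The coloring `c` is proper and, for every
pair of a left vertex and a right vertex, at most `m < d` colors touch both. Then the
number of colors used is at least `d² / m`, which is strictly larger than the maximal
degree `d`. -/
theorem regular_edge_coloring_lower_bound {U V C : Type*} [Fintype U] [Fintype V]
    [DecidableEq U] [DecidableEq V] [DecidableEq C] [Nonempty U]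
    (E : Finset (U × V)) (c : U × V → C) (d m : ℕ)
    (hdL : ∀ u : U, (E.filter fun e => e.1 = u).card = d)
    (hdR : ∀ v : V, (E.filter fun e => e.2 = v).card = d)
    (hproper : ∀ e ∈ E, ∀ e' ∈ E, e ≠ e' → (e.1 = e'.1 ∨ e.2 = e'.2) → c e ≠ c e')
    (hm : m < d)
    (hrich : ∀ (u : U) (v : V),
      ((E.image c).filter fun γ =>
        (∃ v' : V, (u, v') ∈ E ∧ c (u, v') = γ) ∧
        (∃ u' : U, (u', v) ∈ E ∧ c (u', v) = γ)).card ≤ m) :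
    ((d : ℝ) ^ 2) / m ≤ ((E.image c).card : ℝ) ∧ (d : ℝ) < ((d : ℝ) ^ 2) / m := by
  have hEU := card_eq_mul_card_of_card_fiber_eq E Prod.fst hdL
  have hEV := card_eq_mul_card_of_card_fiber_eq E Prod.snd hdR
  have : Nonempty V := by
    have hd : 0 < d := m.zero_le.trans_lt hm
    have : 0 < d * Fintype.card V := hEV ▸ hEU ▸ Nat.mul_pos hd Fintype.card_pos
    exact Fintype.card_pos_iff.mp (Nat.pos_of_mul_pos_left this)
  have hcommon : ∑ p : U × V, #(commonColors E c p.1 p.2) ≤ Fintype.card (U × V) * m := by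
    simpa only [card_univ, smul_eq_mul] using
      sum_le_card_nsmul univ (fun p : U × V => #(commonColors E c p.1 p.2)) m
        fun p _ => hrich p.1 p.2
  refine sq_div_le_and_lt_sq_div
    (Nat.le_of_mul_le_mul_right ?_ (Fintype.card_pos (α := U × V))) hm
  calc d ^ 2 * Fintype.card (U × V) = (d * Fintype.card U) * (d * Fintype.card V) := by
        rw [Fintype.card_prod]; ring
    _ = #E ^ 2 := by rw [← hEU, ← hEV, sq]
    _ ≤ #(E.image c) * ∑ p : U × V, #(commonColors E c p.1 p.2) :=
        sq_card_le_card_image_mul_sum_card_commonColors hproper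
    _ ≤ #(E.image c) * m * Fintype.card (U × V) := by
        rw [mul_assoc, mul_comm m]
        gcongr
end
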